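/- arXiv:2210.11131 — 2 statements merged into one kernel-verified Lean document; each statement's English description precedes it below -/
import Mathlib

section
/- Let X be a real Banach space which is uniformly convex and uniformly smooth with modulus τ. Let C ⊆ X be a closed, convex, bounded, nonempty subset. Let A ⊆ X × X be an accretive operator such that for every λ > 0 and every y ∈ C there exists a point J_λ y ∈ C with (J_λ y, (y − J_λ y)/λ) ∈ A. Let x ∈ C. Then for every sequence (λ_n) ⊆ (0,∞) with λ_n → ∞, the sequence (J_{λ_n} x) converges to a point q ∈ C which is a zero of A, i.e. (q,0) ∈ A; moreover, the limit q does not depend on the choice of the sequence (λ_n): any two sequences (λ_n), (μ_n) ⊆ (0,∞) tending to ∞ yield the same limit of (J_{λ_n} x) and (J_{μ_n} x). -/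
open Filter

noncomputable def Gdir {X : Type*} [NormedAddCommGroup X] [NormedSpace ℝ X] (u v : X) : ℝ :=
  sInf ((fun t : ℝ => (‖u + t • v‖ - ‖u‖) / t) '' Set.Ioi (0:ℝ))

section Gdir
variable {X : Type*} [NormedAddCommGroup X] [NormedSpace ℝ X] (u v w : X)

lemma Gdir_bddBelow : ∀ r ∈ ((fun t : ℝ => (‖u + t • v‖ - ‖u‖) / t) '' Set.Ioi (0:ℝ)), -‖v‖ ≤ r := by
  rintro r ⟨t, ht, rfl⟩
  rw [Set.mem_Ioi] at ht
  rw [le_div_iff₀ ht]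
  have h1 : ‖u‖ ≤ ‖u + t • v‖ + ‖t • v‖ := by
    have := norm_add_le (u + t • v) (-(t • v)); simpa using this
  have h2 : ‖t • v‖ = t * ‖v‖ := by rw [norm_smul, Real.norm_eq_abs, abs_of_pos ht]
  nlinarith [h1]

lemma Gdir_le {t : ℝ} (ht : 0 < t) : Gdir u v ≤ (‖u + t • v‖ - ‖u‖) / t :=
  csInf_le ⟨-‖v‖, fun r hr => Gdir_bddBelow u v r hr⟩ ⟨t, ht, rfl⟩

lemma le_Gdir {c : ℝ} (h : ∀ t : ℝ, 0 < t → c ≤ (‖u + t • v‖ - ‖u‖) / t) : c ≤ Gdir u v :=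
  le_csInf ⟨_, ⟨1, Set.mem_Ioi.2 one_pos, rfl⟩⟩ (by rintro r ⟨t, ht, rfl⟩; exact h t ht)

lemma Gdir_quot_mono {s t : ℝ} (hs : 0 < s) (hst : s ≤ t) :
    (‖u + s • v‖ - ‖u‖) / s ≤ (‖u + t • v‖ - ‖u‖) / t := by
  have ht : 0 < t := lt_of_lt_of_le hs hst
  rw [div_le_div_iff₀ hs ht]
  have key2 : t * ‖u + s • v‖ ≤ s * ‖u + t • v‖ + (t - s) * ‖u‖ := by
    have heq : t • (u + s • v) = s • (u + t • v) + (t - s) • u := by module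
    calc t * ‖u + s • v‖ = ‖t • (u + s • v)‖ := by
          rw [norm_smul, Real.norm_eq_abs, abs_of_pos ht]
      _ = ‖s • (u + t • v) + (t - s) • u‖ := by rw [heq]
      _ ≤ ‖s • (u + t • v)‖ + ‖(t - s) • u‖ := norm_add_le _ _
      _ = s * ‖u + t • v‖ + (t - s) * ‖u‖ := by
          rw [norm_smul, norm_smul, Real.norm_eq_abs, Real.norm_eq_abs,
            abs_of_pos hs, abs_of_nonneg (by linarith)]
  nlinarith [key2]

lemma Gdir_subadd : Gdir u (v + w) ≤ Gdir u v + Gdir u w := by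
  by_contra hlt
  push_neg at hlt
  set ε := (Gdir u (v + w) - (Gdir u v + Gdir u w)) with hε
  have hεpos : 0 < ε := by simp [hε]; linarith
  obtain ⟨a, ⟨tv, htv, rfl⟩, hav⟩ := exists_lt_of_csInf_lt (⟨_, ⟨1, Set.mem_Ioi.2 one_pos, rfl⟩⟩ :
    ((fun t : ℝ => (‖u + t • v‖ - ‖u‖) / t) '' Set.Ioi (0:ℝ)).Nonempty)
    (show sInf _ < Gdir u v + ε/2 by change Gdir u v < _; linarith)
  obtain ⟨b, ⟨tw, htw, rfl⟩, hbw⟩ := exists_lt_of_csInf_lt (⟨_, ⟨1, Set.mem_Ioi.2 one_pos, rfl⟩⟩ :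
    ((fun t : ℝ => (‖u + t • w‖ - ‖u‖) / t) '' Set.Ioi (0:ℝ)).Nonempty)
    (show sInf _ < Gdir u w + ε/2 by change Gdir u w < _; linarith)
  rw [Set.mem_Ioi] at htv htw
  set r := min tv tw / 2 with hr
  have hrpos : 0 < r := by positivity
  have h2r : 0 < 2 * r := by positivity
  have key : ‖u + r • (v + w)‖ ≤ (‖u + (2*r) • v‖ + ‖u + (2*r) • w‖) / 2 := by
    have heq : u + r • (v + w) = (1/2 : ℝ) • ((u + (2*r) • v) + (u + (2*r) • w)) := by module
    have hn : ‖(1/2 : ℝ)‖ = 1/2 := by rw [Real.norm_eq_abs]; norm_num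
    rw [heq, norm_smul, hn]
    have := norm_add_le (u + (2*r) • v) (u + (2*r) • w)
    linarith
  have hquot : (‖u + r • (v + w)‖ - ‖u‖) / r ≤
      (‖u + (2*r) • v‖ - ‖u‖) / (2*r) + (‖u + (2*r) • w‖ - ‖u‖) / (2*r) := by
    rw [← add_div, div_le_div_iff₀ hrpos h2r]
    nlinarith [key]
  have h1 : (‖u + (2*r) • v‖ - ‖u‖) / (2*r) ≤ (‖u + tv • v‖ - ‖u‖) / tv :=
    Gdir_quot_mono u v h2r (by rw [hr]; have := min_le_left tv tw; linarith)
  have h2 : (‖u + (2*r) • w‖ - ‖u‖) / (2*r) ≤ (‖u + tw • w‖ - ‖u‖) / tw :=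
    Gdir_quot_mono u w h2r (by rw [hr]; have := min_le_right tv tw; linarith)
  have hG : Gdir u (v + w) ≤ (‖u + r • (v + w)‖ - ‖u‖) / r := Gdir_le u (v+w) hrpos
  simp only at hav hbw
  linarith

lemma Gdir_neg_self_le : Gdir u (-u) ≤ -‖u‖ := by
  have h := Gdir_le u (-u) (by norm_num : (0:ℝ) < 1/2)
  have heq : u + (1/2 : ℝ) • (-u) = (1/2 : ℝ) • u := by module
  have hn : ‖(1/2 : ℝ) • u‖ = (1/2) * ‖u‖ := by
    rw [norm_smul, Real.norm_eq_abs]; norm_num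
  rw [heq, hn] at h
  calc Gdir u (-u) ≤ (1/2 * ‖u‖ - ‖u‖) / (1/2) := h
    _ = -‖u‖ := by ring

lemma Gdir_smul_le {θ : ℝ} (hθ : 0 < θ) : θ * Gdir u v ≤ Gdir u (θ • v) := by
  apply le_Gdir
  intro t ht
  have h : (‖u + t • θ • v‖ - ‖u‖) / t = θ * ((‖u + (t * θ) • v‖ - ‖u‖) / (t * θ)) := by
    rw [smul_smul]
    field_simp
  rw [h]
  exact mul_le_mul_of_nonneg_left (Gdir_le u v (mul_pos ht hθ)) hθ.le

lemma le_norm_add_Gdir : Gdir u v ≤ ‖u + v‖ - ‖u‖ := by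
  have := Gdir_le u v one_pos
  simpa using this

lemma Gdir_nonneg_of_acc (h : ∀ t : ℝ, 0 < t → ‖u‖ ≤ ‖u + t • v‖) : 0 ≤ Gdir u v :=
  le_Gdir u v (fun t ht => by rw [le_div_iff₀ ht]; have := h t ht; linarith)

end Gdir

lemma aux_le_of_forall_pos {a b : ℝ} (h : ∀ ε : ℝ, 0 < ε → a ≤ b + ε) : a ≤ b := by
  by_contra hc
  push_neg at hc
  have := h ((a - b)/2) (by linarith)
  linarith

set_option maxHeartbeats 2000000 in
theorem resolvents_converge_to_zero
    {X : Type*} [NormedAddCommGroup X] [NormedSpace ℝ X] [CompleteSpace X]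
    (η : ℝ → ℝ) (hη_range : ∀ ε : ℝ, 0 < ε → ε ≤ 2 → 0 < η ε ∧ η ε ≤ 1)
    (hX_uc : ∀ ε : ℝ, 0 < ε → ε ≤ 2 → ∀ x y : X, ‖x‖ ≤ 1 → ‖y‖ ≤ 1 →
      ε ≤ ‖x - y‖ → ‖(1 / 2 : ℝ) • (x + y)‖ ≤ 1 - η ε)
    (τ : ℝ → ℝ) (hτ_pos : ∀ ε : ℝ, 0 < ε → 0 < τ ε)
    (hX_us : ∀ ε : ℝ, 0 < ε → ∀ x y : X, ‖x‖ = 1 → ‖y‖ ≤ τ ε →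
      ‖x + y‖ + ‖x - y‖ ≤ 2 + ε * ‖y‖)
    (C : Set X) (hC_closed : IsClosed C) (hC_convex : Convex ℝ C)
    (hC_bdd : Bornology.IsBounded C) (hC_ne : C.Nonempty)
    (A : Set (X × X))
    (hA_acc : ∀ lam : ℝ, 0 < lam → ∀ p ∈ A, ∀ q ∈ A,
      ‖p.1 - q.1‖ ≤ ‖p.1 - q.1 + lam • (p.2 - q.2)‖)
    (J : ℝ → X → X)
    (hJ : ∀ lam : ℝ, 0 < lam → ∀ y ∈ C,
      J lam y ∈ C ∧ (J lam y, (1 / lam) • (y - J lam y)) ∈ A)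
    (x : X) (hx : x ∈ C) :
    ∃ q : X, q ∈ C ∧ (q, (0 : X)) ∈ A ∧
      ∀ lamSeq : ℕ → ℝ, (∀ n, 0 < lamSeq n) →
        Filter.Tendsto lamSeq Filter.atTop Filter.atTop →
        Filter.Tendsto (fun n => J (lamSeq n) x) Filter.atTop (nhds q) := by
  classical
  obtain ⟨d, hd⟩ := Metric.isBounded_iff.1 hC_bdd
  have hdist : ∀ y ∈ C, ∀ z ∈ C, ‖y - z‖ ≤ d := by
    intro y hy z hz
    rw [← dist_eq_norm]
    exact hd hy hz
  have hd0 : 0 ≤ d := by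
    obtain ⟨y, hy⟩ := hC_ne
    have := hdist y hy y hy
    simpa using this
  set f : X → ℝ → ℝ := fun z lam => ‖J lam x - z‖ with hfdef
  set F : X → ℝ := fun z => Filter.limsup (f z) Filter.atTop with hFdef
  have hf0 : ∀ z lam, 0 ≤ f z lam := fun z lam => norm_nonneg _
  have hJCmem : ∀ lam : ℝ, 0 < lam → J lam x ∈ C := fun lam h => (hJ lam h x hx).1
  have hfev : ∀ z ∈ C, ∀ᶠ lam in Filter.atTop, f z lam ≤ d := by
    intro z hz
    filter_upwards [Filter.eventually_ge_atTop (1:ℝ)] with lam hlam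
    exact hdist _ (hJCmem lam (by linarith)) _ hz
  have hbdd : ∀ z ∈ C, Filter.IsBoundedUnder (· ≤ ·) Filter.atTop (f z) :=
    fun z hz => Filter.isBoundedUnder_of_eventually_le (hfev z hz)
  have hcob : ∀ z, Filter.IsCoboundedUnder (· ≤ ·) Filter.atTop (f z) :=
    fun z => Filter.isCoboundedUnder_le_of_le Filter.atTop (fun lam => hf0 z lam)
  have hF_le : ∀ z r, (∀ᶠ lam in Filter.atTop, f z lam ≤ r) → F z ≤ r :=
    fun z r h => Filter.limsup_le_of_le (hcob z) h
  have hF_ev : ∀ z ∈ C, ∀ r, F z < r → ∀ᶠ lam in Filter.atTop, f z lam < r :=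
    fun z hz r h => Filter.eventually_lt_of_limsup_lt h (hbdd z hz)
  have hF0 : ∀ z ∈ C, 0 ≤ F z := fun z hz =>
    Filter.le_limsup_of_frequently_le (Filter.Frequently.of_forall (hf0 z)) (hbdd z hz)
  have hSne : (F '' C).Nonempty := hC_ne.image F
  have hSbd : BddBelow (F '' C) := ⟨0, by rintro r ⟨z, hz, rfl⟩; exact hF0 z hz⟩
  set m := sInf (F '' C) with hmdef
  have hm_le : ∀ z ∈ C, m ≤ F z := fun z hz => csInf_le hSbd ⟨z, hz, rfl⟩
  have hm0 : 0 ≤ m := le_csInf hSne (by rintro r ⟨z, hz, rfl⟩; exact hF0 z hz)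
  have happrox : ∀ δ : ℝ, 0 < δ → ∃ z ∈ C, F z < m + δ := by
    intro δ hδ
    obtain ⟨r, ⟨z, hz, rfl⟩, hr⟩ := exists_lt_of_csInf_lt hSne (by linarith : m < m + δ)
    exact ⟨z, hz, hr⟩
  have hF_lip : ∀ y ∈ C, ∀ z ∈ C, F y ≤ F z + ‖y - z‖ := by
    intro y hy z hz
    have : ∀ ε : ℝ, 0 < ε → F y ≤ (F z + ‖y - z‖) + ε := by
      intro ε hε
      have h1 := hF_ev z hz (F z + ε) (by linarith)
      have h2 : ∀ᶠ lam in Filter.atTop, f y lam ≤ F z + ‖y - z‖ + ε := by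
        filter_upwards [h1] with lam h
        have h3 : ‖J lam x - y‖ ≤ ‖J lam x - z‖ + ‖z - y‖ := by
          have := norm_add_le (J lam x - z) (z - y)
          have he : J lam x - z + (z - y) = J lam x - y := by abel
          rwa [he] at this
        have h4 : ‖z - y‖ = ‖y - z‖ := norm_sub_rev _ _
        have h5 : f y lam = ‖J lam x - y‖ := rfl
        have h6 : f z lam = ‖J lam x - z‖ := rfl
        rw [h5]
        rw [h6] at h
        linarith
      have := hF_le y _ h2
      linarith
    exact aux_le_of_forall_pos this
  have htriv : ∀ δ : ℝ, 0 < δ → ∀ y ∈ C, ∀ z ∈ C, F y ≤ m + δ → F z ≤ m + δ →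
      ‖y - z‖ ≤ 2*m + 4*δ := by
    intro δ hδ y hy z hz h1 h2
    have e1 := hF_ev y hy (m + 2*δ) (by linarith)
    have e2 := hF_ev z hz (m + 2*δ) (by linarith)
    obtain ⟨lam, hl1, hl2⟩ := (e1.and e2).exists
    have h3 : ‖y - z‖ ≤ f y lam + f z lam := by
      have := norm_sub_le (J lam x - z) (J lam x - y)
      have he : J lam x - z - (J lam x - y) = y - z := by abel
      rw [he] at this
      have h5 : f y lam = ‖J lam x - y‖ := rfl
      have h6 : f z lam = ‖J lam x - z‖ := rfl
      rw [h5, h6]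
      linarith
    linarith
  -- key uniform-convexity closeness lemma
  have hkey : ∀ ε₀ : ℝ, 0 < ε₀ → ∃ δ : ℝ, 0 < δ ∧
      ∀ y ∈ C, ∀ z ∈ C, F y ≤ m + δ → F z ≤ m + δ → ‖y - z‖ ≤ ε₀ := by
    intro ε₀ hε₀
    rcases eq_or_lt_of_le hm0 with hmz | hmpos
    · refine ⟨ε₀/4, by positivity, ?_⟩
      intro y hy z hz h1 h2
      have := htriv (ε₀/4) (by positivity) y hy z hz h1 h2
      rw [← hmz] at this
      linarith
    · by_cases hε2 : ε₀ / (m+1) ≤ 2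
      · set ε' := ε₀ / (m+1) with hε'def
        have hε'pos : 0 < ε' := div_pos hε₀ (by linarith)
        obtain ⟨hηpos, hη1⟩ := hη_range ε' hε'pos hε2
        set δ := min (1/2) (m * η ε' / 4) with hδdef
        have hδpos : 0 < δ := lt_min (by norm_num) (by positivity)
        have hδA : δ ≤ 1/2 := min_le_left _ _
        have hδB : δ ≤ m * η ε' / 4 := min_le_right _ _
        refine ⟨δ, hδpos, ?_⟩
        intro y hy z hz h1 h2
        by_contra hcon
        push_neg at hcon
        set r := m + 2*δ with hrdef
        have hrpos : 0 < r := by rw [hrdef]; linarith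
        have hr1 : r ≤ m + 1 := by rw [hrdef]; linarith
        set mid := (1/2 : ℝ) • y + (1/2 : ℝ) • z with hmiddef
        have hmidC : mid ∈ C := hC_convex hy hz (by norm_num) (by norm_num) (by norm_num)
        have e1 := hF_ev y hy r (by rw [hrdef]; linarith)
        have e2 := hF_ev z hz r (by rw [hrdef]; linarith)
        have emid : ∀ᶠ lam in Filter.atTop, f mid lam ≤ r * (1 - η ε') := by
          filter_upwards [e1, e2] with lam ha hb
          have ha' : ‖J lam x - y‖ < r := ha
          have hb' : ‖J lam x - z‖ < r := hb
          have hna : ‖(r⁻¹ • (J lam x - y) : X)‖ ≤ 1 := by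
            rw [norm_smul, Real.norm_eq_abs, abs_of_pos (inv_pos.2 hrpos)]
            rw [inv_mul_le_iff₀ hrpos]
            simpa using ha'.le
          have hnb : ‖(r⁻¹ • (J lam x - z) : X)‖ ≤ 1 := by
            rw [norm_smul, Real.norm_eq_abs, abs_of_pos (inv_pos.2 hrpos)]
            rw [inv_mul_le_iff₀ hrpos]
            simpa using hb'.le
          have hab : ε' ≤ ‖(r⁻¹ • (J lam x - y) : X) - r⁻¹ • (J lam x - z)‖ := by
            have heq : (r⁻¹ • (J lam x - y) : X) - r⁻¹ • (J lam x - z) = r⁻¹ • (z - y) := by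
              rw [← smul_sub]
              congr 1
              abel
            rw [heq, norm_smul, Real.norm_eq_abs, abs_of_pos (inv_pos.2 hrpos)]
            have hzy : ε₀ ≤ ‖z - y‖ := by rw [norm_sub_rev]; linarith
            rw [inv_mul_eq_div, hε'def,
              div_le_div_iff₀ (by linarith : (0:ℝ) < m + 1) hrpos]
            nlinarith [hzy, hrpos, hr1, hε₀]
          have huc := hX_uc ε' hε'pos hε2 _ _ hna hnb hab
          have hrel : (1/2 : ℝ) • ((r⁻¹ • (J lam x - y) : X) + r⁻¹ • (J lam x - z))
              = r⁻¹ • (J lam x - mid) := by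
            rw [hmiddef]
            module
          rw [hrel, norm_smul, Real.norm_eq_abs, abs_of_pos (inv_pos.2 hrpos)] at huc
          have h8 : f mid lam = ‖J lam x - mid‖ := rfl
          rw [h8]
          have h9 := mul_le_mul_of_nonneg_left huc hrpos.le
          rwa [← mul_assoc, mul_inv_cancel₀ hrpos.ne', one_mul] at h9
        have hFmid : F mid ≤ r * (1 - η ε') := hF_le mid _ emid
        have hmmid : m ≤ F mid := hm_le mid hmidC
        rw [hrdef] at hFmid
        nlinarith [hηpos, hη1, hδB, hmpos, hδpos]
      · refine ⟨1/2, by norm_num, ?_⟩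
        intro y hy z hz h1 h2
        have := htriv (1/2) (by norm_num) y hy z hz h1 h2
        push_neg at hε2
        rw [lt_div_iff₀ (by linarith : (0:ℝ) < m + 1)] at hε2
        linarith
  -- existence of asymptotic-center minimizer q
  have hmin : ∃ q, q ∈ C ∧ F q ≤ m := by
    have hex : ∀ k : ℕ, ∃ z, z ∈ C ∧ F z < m + 1/(k+1) := by
      intro k
      obtain ⟨z, hz, h⟩ := happrox (1/(k+1)) (by positivity)
      exact ⟨z, hz, h⟩
    choose zs hzsC hzsF using hex
    have hcauchy : CauchySeq zs := by
      rw [Metric.cauchySeq_iff]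
      intro ε hε
      obtain ⟨δ, hδpos, hδ⟩ := hkey (ε/2) (by positivity)
      obtain ⟨N, hN⟩ := exists_nat_one_div_lt hδpos
      refine ⟨N, fun k hk l hl => ?_⟩
      have hbound : ∀ j : ℕ, N ≤ j → F (zs j) ≤ m + δ := by
        intro j hj
        have h1 : (1:ℝ)/(j+1) ≤ 1/(N+1) := by
          apply one_div_le_one_div_of_le (by positivity)
          exact_mod_cast Nat.succ_le_succ hj
        have := hzsF j
        linarith [hN]
      rw [dist_eq_norm]
      have := hδ (zs k) (hzsC k) (zs l) (hzsC l) (hbound k hk) (hbound l hl)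
      linarith
    obtain ⟨q, hq⟩ := cauchySeq_tendsto_of_complete hcauchy
    have hqC : q ∈ C := hC_closed.mem_of_tendsto hq (Filter.Eventually.of_forall hzsC)
    refine ⟨q, hqC, ?_⟩
    apply aux_le_of_forall_pos
    intro ε hε
    obtain ⟨N1, hN1⟩ := exists_nat_one_div_lt (half_pos hε)
    obtain ⟨N2, hN2⟩ := Metric.tendsto_atTop.1 hq (ε/2) (half_pos hε)
    set k := max N1 N2 with hkdef
    have h1 : F q ≤ F (zs k) + ‖q - zs k‖ := hF_lip q hqC (zs k) (hzsC k)
    have h2 : F (zs k) < m + 1/(N1+1) := by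
      have h3 : (1:ℝ)/(k+1) ≤ 1/(N1+1) := by
        apply one_div_le_one_div_of_le (by positivity)
        exact_mod_cast Nat.succ_le_succ (le_max_left N1 N2)
      have := hzsF k
      linarith
    have h4 : ‖q - zs k‖ < ε/2 := by
      have := hN2 k (le_max_right N1 N2)
      rwa [dist_comm, dist_eq_norm] at this
    linarith [hN1]
  obtain ⟨q, hqC, hFq⟩ := hmin
  -- resolvent inequality
  have hres : ∀ lam : ℝ, 1 ≤ lam → ∀ z ∈ C,
      ‖J lam x - J 1 z‖ ≤ ‖J lam x - z‖ + (1/lam) * ‖x - J lam x‖ := by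
    intro lam hlam z hz
    have hlam0 : (0:ℝ) < lam := by linarith
    have p1 := (hJ lam hlam0 x hx).2
    have p2 := (hJ 1 one_pos z hz).2
    have p1' : (J lam x, (1/(1:ℝ)) • ((J lam x + (1/lam)•(x - J lam x)) - J lam x)) ∈ A := by
      have hcomp : (1/(1:ℝ)) • ((J lam x + (1/lam)•(x - J lam x)) - J lam x)
          = (1/lam) • (x - J lam x) := by
        rw [add_sub_cancel_left]
        norm_num
      rw [hcomp]
      exact p1
    have hacc : ‖J lam x - J 1 z‖ ≤ ‖J lam x - J 1 z +
        (1:ℝ) • ((1/(1:ℝ)) • ((J lam x + (1/lam)•(x - J lam x)) - J lam x)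
          - (1/(1:ℝ)) • (z - J 1 z))‖ :=
      hA_acc 1 one_pos _ p1' _ p2
    have hsimp : J lam x - J 1 z +
        (1:ℝ) • ((1/(1:ℝ)) • ((J lam x + (1/lam)•(x - J lam x)) - J lam x)
          - (1/(1:ℝ)) • (z - J 1 z)) = (J lam x + (1/lam)•(x - J lam x)) - z := by
      module
    rw [hsimp] at hacc
    have heq2 : (J lam x + (1/lam)•(x - J lam x)) - z = (J lam x - z) + (1/lam)•(x - J lam x) := by
      abel
    rw [heq2] at hacc
    calc ‖J lam x - J 1 z‖ ≤ ‖(J lam x - z) + (1/lam)•(x - J lam x)‖ := hacc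
      _ ≤ ‖J lam x - z‖ + ‖(1/lam)•(x - J lam x)‖ := norm_add_le _ _
      _ = ‖J lam x - z‖ + (1/lam) * ‖x - J lam x‖ := by
          rw [norm_smul, Real.norm_eq_abs, abs_of_pos (by positivity)]
  -- q is a fixed point of J 1, hence a zero of A
  have hJ1q : J 1 q = q := by
    have hFJ : F (J 1 q) ≤ m := by
      apply aux_le_of_forall_pos
      intro ε hε
      have hev1 := hF_ev q hqC (m + ε/2) (by linarith)
      have hev2 : ∀ᶠ lam in Filter.atTop, max 1 (2*d/ε) ≤ lam := Filter.eventually_ge_atTop _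
      have hev3 : ∀ᶠ lam in Filter.atTop, f (J 1 q) lam ≤ m + ε := by
        filter_upwards [hev1, hev2] with lam h1 h2
        have hlam1 : 1 ≤ lam := le_trans (le_max_left _ _) h2
        have hlamd : 2*d/ε ≤ lam := le_trans (le_max_right _ _) h2
        have hlam0 : (0:ℝ) < lam := by linarith
        have hr := hres lam hlam1 q hqC
        have hxu : ‖x - J lam x‖ ≤ d := hdist _ hx _ (hJCmem lam hlam0)
        have hfrac : (1/lam) * ‖x - J lam x‖ ≤ ε/2 := by
          have h5 : (1/lam) * ‖x - J lam x‖ ≤ (1/lam) * d :=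
            mul_le_mul_of_nonneg_left hxu (by positivity)
          have h6 : (1/lam) * d ≤ ε/2 := by
            rw [div_le_iff₀ hε] at hlamd
            rw [div_mul_eq_mul_div, one_mul, div_le_iff₀ hlam0]
            nlinarith [hlamd]
          linarith
        have h8 : f (J 1 q) lam = ‖J lam x - J 1 q‖ := rfl
        have h9 : f q lam = ‖J lam x - q‖ := rfl
        rw [h8]
        rw [h9] at h1
        linarith
      exact hF_le _ _ hev3
    have hnorm : ∀ ε₀ : ℝ, 0 < ε₀ → ‖J 1 q - q‖ ≤ ε₀ := by
      intro ε₀ h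
      obtain ⟨δ, hδ, hk⟩ := hkey ε₀ h
      exact hk _ (hJ 1 one_pos q hqC).1 _ hqC (by linarith) (by linarith)
    have h0 : ‖J 1 q - q‖ ≤ 0 := aux_le_of_forall_pos (fun ε hε => by
      simpa using hnorm ε hε)
    have : ‖J 1 q - q‖ = 0 := le_antisymm h0 (norm_nonneg _)
    have := norm_eq_zero.1 this
    exact sub_eq_zero.1 this
  have hzero : (q, (0:X)) ∈ A := by
    have h := (hJ 1 one_pos q hqC).2
    rw [hJ1q] at h
    simpa using h
  -- variational inequality
  have hVI : ∀ lam : ℝ, 0 < lam → ‖J lam x - q‖ ≤ Gdir (J lam x - q) (x - q) := by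
    intro lam h0
    have hacc : ∀ t : ℝ, 0 < t → ‖J lam x - q‖ ≤ ‖(J lam x - q) + t • (x - J lam x)‖ := by
      intro t ht
      have h : ‖J lam x - q‖ ≤ ‖J lam x - q + (t*lam) • ((1/lam) • (x - J lam x) - 0)‖ :=
        hA_acc (t*lam) (mul_pos ht h0) _ (hJ lam h0 x hx).2 _ hzero
      have heq : J lam x - q + (t*lam) • ((1/lam) • (x - J lam x) - 0)
          = (J lam x - q) + t • (x - J lam x) := by
        rw [sub_zero, smul_smul]
        have h2 : t * lam * (1/lam) = t := by field_simp
        rw [h2]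
      rwa [heq] at h
    have h1 : 0 ≤ Gdir (J lam x - q) (x - J lam x) :=
      Gdir_nonneg_of_acc _ _ hacc
    have hsplit : x - J lam x = (x - q) + (-(J lam x - q)) := by abel
    have h2 : Gdir (J lam x - q) ((x - q) + (-(J lam x - q)))
        ≤ Gdir (J lam x - q) (x - q) + Gdir (J lam x - q) (-(J lam x - q)) :=
      Gdir_subadd _ _ _
    have h3 := Gdir_neg_self_le (J lam x - q)
    rw [hsplit] at h1
    linarith
  -- m = 0 via uniform smoothness
  have hm_zero : m = 0 := by
    by_contra hne
    have hmpos : 0 < m := lt_of_le_of_ne hm0 (Ne.symm hne)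
    set ε' := m / (4*(d+1)) with hε'def
    have hε'pos : 0 < ε' := by positivity
    have hτ' := hτ_pos ε' hε'pos
    set θ := min (min (m/(2*(d+1))) (τ ε' * m/(2*(d+1)))) (1/2) with hθdef
    have hθpos : 0 < θ := lt_min (lt_min (by positivity) (by positivity)) (by norm_num)
    have hθhalf : θ ≤ 1/2 := min_le_right _ _
    have hθa : θ ≤ m/(2*(d+1)) := le_trans (min_le_left _ _) (min_le_left _ _)
    have hθb : θ ≤ τ ε' * m/(2*(d+1)) := le_trans (min_le_left _ _) (min_le_right _ _)
    have hθd1 : θ * d < m/2 := by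
      have e1 : θ*d ≤ m/(2*(d+1))*d := mul_le_mul_of_nonneg_right hθa hd0
      have e2 : m/(2*(d+1))*d < m/2 := by
        rw [div_mul_eq_mul_div, div_lt_div_iff₀ (by positivity) (by norm_num : (0:ℝ) < 2)]
        nlinarith [hmpos, hd0]
      linarith
    have hθd2 : θ * d ≤ τ ε' * (m/2) := by
      have e1 : θ*d ≤ (τ ε' * m/(2*(d+1)))*d := mul_le_mul_of_nonneg_right hθb hd0
      have e2 : (τ ε' * m/(2*(d+1)))*d ≤ τ ε' * (m/2) := by
        rw [div_mul_eq_mul_div, div_le_iff₀ (by positivity)]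
        nlinarith [mul_nonneg (mul_nonneg hτ'.le hmpos.le) hd0, mul_pos hτ' hmpos]
      linarith
    have hxq : ‖x - q‖ ≤ d := hdist x hx q hqC
    set mθ := q + θ • (x - q) with hmθdef
    have hmθC : mθ ∈ C := by
      have heq : mθ = (1-θ) • q + θ • x := by rw [hmθdef]; module
      rw [heq]
      exact hC_convex hqC hx (by linarith) hθpos.le (by ring)
    set M := max (m - θ*m/8) (m/2 + θ*d) with hMdef
    have hev : ∀ᶠ lam in Filter.atTop, f mθ lam ≤ M := by
      have h1 := hF_ev q hqC (m + θ*m/8) (by nlinarith [hθpos, hmpos])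
      filter_upwards [h1, Filter.eventually_ge_atTop (1:ℝ)] with lam hfq hlam1
      have hlam0 : (0:ℝ) < lam := by linarith
      have himg : J lam x - mθ = (J lam x - q) - θ • (x - q) := by
        rw [hmθdef]; abel
      have hfq' : ‖J lam x - q‖ < m + θ*m/8 := hfq
      have hfm : f mθ lam = ‖J lam x - mθ‖ := rfl
      have hθnorm : ‖(θ • (x - q) : X)‖ = θ * ‖x - q‖ := by
        rw [norm_smul, Real.norm_eq_abs, abs_of_pos hθpos]
      by_cases hcase : ‖J lam x - q‖ < m/2
      · rw [hfm, himg]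
        have h2 := norm_sub_le (J lam x - q) (θ • (x - q))
        have h3 : θ * ‖x - q‖ ≤ θ * d := mul_le_mul_of_nonneg_left hxq hθpos.le
        have h4 : ‖(J lam x - q) - θ • (x - q)‖ ≤ m/2 + θ*d := by
          rw [hθnorm] at h2
          linarith
        exact le_trans h4 (le_max_right _ _)
      · push_neg at hcase
        have hunorm : 0 < ‖J lam x - q‖ := lt_of_lt_of_le (by linarith) hcase
        set u := J lam x - q with hudef
        set w := θ • (x - q) with hwdef
        have hwd : ‖w‖ ≤ θ * d := by
          rw [hwdef, hθnorm]
          exact mul_le_mul_of_nonneg_left hxq hθpos.le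
        have hwle : ‖w‖ ≤ τ ε' * ‖u‖ := by
          have h5 : τ ε' * (m/2) ≤ τ ε' * ‖u‖ := mul_le_mul_of_nonneg_left hcase hτ'.le
          linarith
        -- smoothness inequality
        have hsm : ‖u + w‖ + ‖u - w‖ ≤ 2*‖u‖ + ε' * ‖w‖ := by
          have hx1 : ‖(‖u‖⁻¹ • u : X)‖ = 1 := by
            rw [norm_smul, Real.norm_eq_abs, abs_of_pos (inv_pos.2 hunorm),
              inv_mul_cancel₀ hunorm.ne']
          have hy1 : ‖(‖u‖⁻¹ • w : X)‖ ≤ τ ε' := by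
            rw [norm_smul, Real.norm_eq_abs, abs_of_pos (inv_pos.2 hunorm),
              inv_mul_le_iff₀ hunorm]
            linarith [hwle]
          have h := hX_us ε' hε'pos _ _ hx1 hy1
          rw [← smul_add, ← smul_sub] at h
          have k1 : ‖u‖ * ‖(‖u‖⁻¹ • (u+w) : X)‖ = ‖u + w‖ := by
            rw [norm_smul, Real.norm_eq_abs, abs_of_pos (inv_pos.2 hunorm),
              ← mul_assoc, mul_inv_cancel₀ hunorm.ne', one_mul]
          have k2 : ‖u‖ * ‖(‖u‖⁻¹ • (u-w) : X)‖ = ‖u - w‖ := by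
            rw [norm_smul, Real.norm_eq_abs, abs_of_pos (inv_pos.2 hunorm),
              ← mul_assoc, mul_inv_cancel₀ hunorm.ne', one_mul]
          have kw : ‖u‖ * ‖(‖u‖⁻¹ • w : X)‖ = ‖w‖ := by
            rw [norm_smul, Real.norm_eq_abs, abs_of_pos (inv_pos.2 hunorm),
              ← mul_assoc, mul_inv_cancel₀ hunorm.ne', one_mul]
          have k3 : ε' * (‖u‖ * ‖(‖u‖⁻¹ • w : X)‖) = ε' * ‖w‖ := by rw [kw]
          have h10 := mul_le_mul_of_nonneg_left h (norm_nonneg u)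
          nlinarith [h10, k1, k2, k3]
        have hg := hVI lam hlam0
        have hg2 : θ * Gdir u (x - q) ≤ Gdir u w := Gdir_smul_le u (x - q) hθpos
        have hg9 : Gdir u w ≤ ‖u + w‖ - ‖u‖ := le_norm_add_Gdir u w
        have hεw : ε' * ‖w‖ ≤ θ * m / 4 := by
          have h11 : ε' * ‖w‖ ≤ ε' * (θ * d) := mul_le_mul_of_nonneg_left hwd hε'pos.le
          have h12 : ε' * (θ * d) ≤ θ * m / 4 := by
            rw [hε'def]
            rw [div_mul_eq_mul_div, div_le_div_iff₀ (by positivity) (by norm_num : (0:ℝ) < 4)]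
            nlinarith [hθpos, hmpos, hd0]
          linarith
        have hGlb : m/2 ≤ Gdir u (x - q) := le_trans hcase hg
        have hfin : ‖u - w‖ ≤ m - θ*m/8 := by
          have h13 : θ * (m/2) ≤ θ * Gdir u (x - q) := mul_le_mul_of_nonneg_left hGlb hθpos.le
          have h14 : ‖u‖ < m + θ*m/8 := hfq'
          nlinarith [hsm, hg9, hg2, hεw, h13, h14]
        rw [hfm, himg]
        exact le_trans hfin (le_max_left _ _)
    have hFmθ : F mθ ≤ M := hF_le _ _ hev
    have hmM : m ≤ M := le_trans (hm_le mθ hmθC) hFmθ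
    have hM1 : m - θ*m/8 < m := by nlinarith [hθpos, hmpos]
    have hM2 : m/2 + θ*d < m := by linarith
    have : M < m := max_lt hM1 hM2
    linarith
  -- conclusion
  refine ⟨q, hqC, hzero, ?_⟩
  have hconv : Filter.Tendsto (fun lam : ℝ => J lam x) Filter.atTop (nhds q) := by
    rw [Metric.tendsto_atTop]
    intro ε hε
    have hFq0 : F q < ε := by rw [hm_zero] at hFq; linarith
    have hev := hF_ev q hqC ε hFq0
    rw [Filter.eventually_atTop] at hev
    obtain ⟨N, hN⟩ := hev
    exact ⟨N, fun lam hlam => by rw [dist_eq_norm]; exact hN lam hlam⟩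
  intro lamSeq _ hto
  exact hconv.comp hto
end

section
/- Let X be a real Banach space which is uniformly convex and uniformly smooth with modulus τ. Let C ⊆ X be a closed, convex, bounded, nonempty subset. Let A ⊆ X × X be an accretive operator such that for every λ > 0 and every y ∈ C there exists a point J_λ y ∈ C with (J_λ y, (y − J_λ y)/λ) ∈ A. Let F := {p ∈ C : (p,0) ∈ A} be the set of zeros of A in C. Then F is nonempty, and the map Q : C → F defined by Qx := lim_{n→∞} J_{λ_n} x (for any sequence (λ_n) ⊆ (0,∞) with λ_n → ∞; the limit exists, lies in F, and is independent of the sequence) is a sunny nonexpansive retraction from C onto F, and it is the unique sunny nonexpansive retraction from C onto F. -/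
open Classical in
noncomputable def nfun {X : Type*} [NormedAddCommGroup X] [NormedSpace ℝ X] (u : X) :
    X →L[ℝ] ℝ :=
  if h : u = 0 then 0 else Classical.choose (exists_dual_vector ℝ u (norm_ne_zero_iff.mpr h))

lemma nfun_norm {X : Type*} [NormedAddCommGroup X] [NormedSpace ℝ X] {u : X} (h : u ≠ 0) :
    ‖nfun u‖ = 1 := by
  have := Classical.choose_spec (exists_dual_vector ℝ u (norm_ne_zero_iff.mpr h))
  simp only [nfun, dif_neg h]
  exact this.1

lemma nfun_self {X : Type*} [NormedAddCommGroup X] [NormedSpace ℝ X] {u : X} (h : u ≠ 0) :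
    nfun u u = ‖u‖ := by
  have := Classical.choose_spec (exists_dual_vector ℝ u (norm_ne_zero_iff.mpr h))
  simp only [nfun, dif_neg h]
  exact this.2

section
variable {X : Type*} [NormedAddCommGroup X] [NormedSpace ℝ X]

lemma norming_stab (τ : ℝ → ℝ) (hτ_pos : ∀ ε : ℝ, 0 < ε → 0 < τ ε)
    (hX_us : ∀ ε : ℝ, 0 < ε → ∀ x y : X, ‖x‖ = 1 → ‖y‖ ≤ τ ε →
      ‖x + y‖ + ‖x - y‖ ≤ 2 + ε * ‖y‖)
    {u v : X} (hu : ‖u‖ = 1) (hv : ‖v‖ = 1)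
    {f g : X →L[ℝ] ℝ} (hf1 : ‖f‖ ≤ 1) (hfu : f u = 1) (hg1 : ‖g‖ ≤ 1) (hgv : g v = 1)
    {ε : ℝ} (hε : 0 < ε) : ‖f - g‖ ≤ ε + ‖u - v‖ / τ ε := by
  have hτ := hτ_pos ε hε
  have key : ∀ y : X, ‖y‖ ≤ τ ε → (f - g) y ≤ ε * ‖y‖ + ‖u - v‖ := by
    intro y hy
    have h1 : f (u + y) ≤ ‖u + y‖ := by
      calc f (u + y) ≤ ‖f (u + y)‖ := le_abs_self _
        _ ≤ ‖f‖ * ‖u + y‖ := f.le_opNorm _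
        _ ≤ 1 * ‖u + y‖ := by
            exact mul_le_mul_of_nonneg_right hf1 (norm_nonneg _)
        _ = ‖u + y‖ := one_mul _
    have h2 : g (v - y) ≤ ‖v - y‖ := by
      calc g (v - y) ≤ ‖g (v - y)‖ := le_abs_self _
        _ ≤ ‖g‖ * ‖v - y‖ := g.le_opNorm _
        _ ≤ 1 * ‖v - y‖ := mul_le_mul_of_nonneg_right hg1 (norm_nonneg _)
        _ = ‖v - y‖ := one_mul _
    have hf_y : f y ≤ ‖u + y‖ - 1 := by
      have : f (u + y) = 1 + f y := by rw [map_add, hfu]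
      linarith
    have hg_y : 1 - ‖v - y‖ ≤ g y := by
      have : g (v - y) = 1 - g y := by rw [map_sub, hgv]
      linarith
    have hus := hX_us ε hε u y hu hy
    have hvy : ‖v - y‖ ≤ ‖u - y‖ + ‖u - v‖ := by
      calc ‖v - y‖ = ‖(u - y) - (u - v)‖ := by congr 1; abel
        _ ≤ ‖u - y‖ + ‖u - v‖ := norm_sub_le _ _
    have : (f - g) y = f y - g y := by simp
    rw [this]
    linarith
  have habs : ∀ y : X, ‖y‖ ≤ τ ε → |(f - g) y| ≤ ε * ‖y‖ + ‖u - v‖ := by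
    intro y hy
    rw [abs_le]
    constructor
    · have := key (-y) (by rwa [norm_neg])
      rw [map_neg] at this
      rw [norm_neg] at this
      linarith
    · exact key y hy
  have hM : (0:ℝ) ≤ ε + ‖u - v‖ / τ ε := by positivity
  apply ContinuousLinearMap.opNorm_le_bound _ hM
  intro y
  rcases eq_or_ne y 0 with rfl | hy0
  · simp
  · have hny : 0 < ‖y‖ := norm_pos_iff.mpr hy0
    set z := (τ ε / ‖y‖) • y with hz
    have hnz : ‖z‖ = τ ε := by
      rw [hz, norm_smul, Real.norm_eq_abs, abs_of_pos (by positivity)]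
      field_simp
    have hz_abs := habs z (le_of_eq hnz)
    have hfz : (f - g) z = (τ ε / ‖y‖) * (f - g) y := by
      rw [hz, map_smul]; simp
    rw [hfz] at hz_abs
    rw [abs_mul, abs_of_pos (by positivity : (0:ℝ) < τ ε / ‖y‖)] at hz_abs
    rw [hnz] at hz_abs
    rw [Real.norm_eq_abs]
    rw [div_mul_eq_mul_div, div_le_iff₀ hny] at hz_abs
    calc |(f - g) y| ≤ (ε * τ ε + ‖u - v‖) * ‖y‖ / τ ε := by
          rw [le_div_iff₀ hτ]; linarith
      _ = (ε + ‖u - v‖ / τ ε) * ‖y‖ := by field_simp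
end

section
variable {X : Type*} [NormedAddCommGroup X] [NormedSpace ℝ X]
variable (τ : ℝ → ℝ) (hτ_pos : ∀ ε : ℝ, 0 < ε → 0 < τ ε)
variable (hX_us : ∀ ε : ℝ, 0 < ε → ∀ x y : X, ‖x‖ = 1 → ‖y‖ ≤ τ ε →
      ‖x + y‖ + ‖x - y‖ ≤ 2 + ε * ‖y‖)

include hτ_pos hX_us

lemma norming_uniq {u : X} (hu : ‖u‖ = 1)
    {f g : X →L[ℝ] ℝ} (hf1 : ‖f‖ ≤ 1) (hfu : f u = 1) (hg1 : ‖g‖ ≤ 1) (hgu : g u = 1) :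
    f = g := by
  have h : ∀ ε : ℝ, 0 < ε → ‖f - g‖ ≤ ε := by
    intro ε hε
    have := norming_stab τ hτ_pos hX_us hu hu hf1 hfu hg1 hgu hε
    simpa using this
  have : ‖f - g‖ ≤ 0 := le_of_forall_pos_le_add (by intro ε hε; simpa using h ε hε)
  have : f - g = 0 := by
    have := le_antisymm this (norm_nonneg _)
    exact norm_eq_zero.mp this
  linear_combination (norm := module) this

lemma nfun_eq_of {u : X} (h : u ≠ 0) {f : X →L[ℝ] ℝ}
    (hf1 : ‖f‖ = 1) (hfu : f u = ‖u‖) : f = nfun u := by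
  have hnu : (0:ℝ) < ‖u‖ := norm_pos_iff.mpr h
  set w : X := ‖u‖⁻¹ • u with hw
  have hwn : ‖w‖ = 1 := by
    rw [hw, norm_smul, Real.norm_eq_abs, abs_of_pos (by positivity)]
    field_simp
  have hfw : f w = 1 := by
    rw [hw, map_smul]
    simp [hfu]
    field_simp
  have hgw : nfun u w = 1 := by
    rw [hw, map_smul]
    simp [nfun_self h]
    field_simp
  exact norming_uniq τ hτ_pos hX_us hwn (le_of_eq hf1) hfw
    (le_of_eq (nfun_norm h)) hgw

lemma nfun_smul_pos {u : X} (h : u ≠ 0) {s : ℝ} (hs : 0 < s) :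
    nfun (s • u) = nfun u := by
  have hsu : s • u ≠ 0 := smul_ne_zero (ne_of_gt hs) h
  apply nfun_eq_of τ hτ_pos hX_us h (nfun_norm hsu)
  have h1 : nfun (s • u) (s • u) = ‖s • u‖ := nfun_self hsu
  rw [map_smul, norm_smul, Real.norm_eq_abs, abs_of_pos hs] at h1
  simp only [smul_eq_mul] at h1
  exact mul_left_cancel₀ (ne_of_gt hs) h1

lemma nfun_neg {u : X} (h : u ≠ 0) : nfun (-u) = -(nfun u) := by
  symm
  apply nfun_eq_of τ hτ_pos hX_us (neg_ne_zero.mpr h)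
  · rw [norm_neg]; exact nfun_norm h
  · simp [nfun_self h]

lemma nfun_unit {u : X} (h : u ≠ 0) : nfun (‖u‖⁻¹ • u) = nfun u := by
  exact nfun_smul_pos τ hτ_pos hX_us h (inv_pos.mpr (norm_pos_iff.mpr h))

omit hτ_pos hX_us in
lemma unit_sub_bound {a b : X} {r : ℝ} (hr : 0 < r) (ha : r ≤ ‖a‖) (hb : r ≤ ‖b‖) :
    ‖‖a‖⁻¹ • a - ‖b‖⁻¹ • b‖ ≤ 2 * ‖a - b‖ / r := by
  have hna : (0:ℝ) < ‖a‖ := lt_of_lt_of_le hr ha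
  have hnb : (0:ℝ) < ‖b‖ := lt_of_lt_of_le hr hb
  have key : ‖a‖⁻¹ • a - ‖b‖⁻¹ • b = ‖a‖⁻¹ • (a - b) + (‖a‖⁻¹ - ‖b‖⁻¹) • b := by
    module
  rw [key]
  have h1 : ‖(‖a‖⁻¹ : ℝ) • (a - b)‖ = ‖a - b‖ / ‖a‖ := by
    rw [norm_smul, Real.norm_eq_abs, abs_of_pos (by positivity : (0:ℝ) < ‖a‖⁻¹)]
    rw [inv_mul_eq_div]
  have habs : |‖a‖⁻¹ - ‖b‖⁻¹| * ‖b‖ ≤ ‖a - b‖ / ‖a‖ := by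
    have heq : (‖a‖⁻¹ - ‖b‖⁻¹) * ‖b‖ = (‖b‖ - ‖a‖) / ‖a‖ := by field_simp
    have h3 : |‖a‖⁻¹ - ‖b‖⁻¹| * ‖b‖ = |(‖a‖⁻¹ - ‖b‖⁻¹) * ‖b‖| := by
      rw [abs_mul, abs_of_nonneg (norm_nonneg b)]
    rw [h3, heq, abs_div, abs_of_pos hna]
    gcongr
    rw [abs_sub_comm]
    exact abs_norm_sub_norm_le a b
  have h2 : ‖((‖a‖⁻¹ - ‖b‖⁻¹ : ℝ)) • b‖ ≤ ‖a - b‖ / ‖a‖ := by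
    rw [norm_smul, Real.norm_eq_abs]
    exact habs
  calc ‖(‖a‖⁻¹ : ℝ) • (a - b) + ((‖a‖⁻¹ - ‖b‖⁻¹ : ℝ)) • b‖
      ≤ ‖(‖a‖⁻¹ : ℝ) • (a - b)‖ + ‖((‖a‖⁻¹ - ‖b‖⁻¹ : ℝ)) • b‖ := norm_add_le _ _
    _ ≤ ‖a - b‖ / ‖a‖ + ‖a - b‖ / ‖a‖ := by rw [h1]; linarith
    _ = 2 * ‖a - b‖ / ‖a‖ := by ring
    _ ≤ 2 * ‖a - b‖ / r := by gcongr


lemma nfun_stab_annulus {r θ : ℝ} (hr : 0 < r) (hθ : 0 < θ) :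
    ∃ δ : ℝ, 0 < δ ∧ ∀ a b : X, r ≤ ‖a‖ → r ≤ ‖b‖ → ‖a - b‖ ≤ δ →
      ‖nfun a - nfun b‖ ≤ θ := by
  have hθ2 : (0:ℝ) < θ / 2 := by linarith
  have hτ := hτ_pos (θ/2) hθ2
  refine ⟨(θ/2) * τ (θ/2) * r / 4, by positivity, ?_⟩
  intro a b ha hb hab
  have ha0 : a ≠ 0 := by
    intro h; rw [h, norm_zero] at ha; linarith
  have hb0 : b ≠ 0 := by
    intro h; rw [h, norm_zero] at hb; linarith
  have hua : ‖(‖a‖⁻¹ • a : X)‖ = 1 := by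
    rw [norm_smul, Real.norm_eq_abs, abs_of_pos (inv_pos.mpr (norm_pos_iff.mpr ha0))]
    exact inv_mul_cancel₀ (ne_of_gt (norm_pos_iff.mpr ha0))
  have hub : ‖(‖b‖⁻¹ • b : X)‖ = 1 := by
    rw [norm_smul, Real.norm_eq_abs, abs_of_pos (inv_pos.mpr (norm_pos_iff.mpr hb0))]
    exact inv_mul_cancel₀ (ne_of_gt (norm_pos_iff.mpr hb0))
  have haa : (nfun (‖a‖⁻¹ • a) : X →L[ℝ] ℝ) (‖a‖⁻¹ • a) = 1 := by
    rw [nfun_self (by rw [← norm_pos_iff, hua]; norm_num), hua]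
  have hbb : (nfun (‖b‖⁻¹ • b) : X →L[ℝ] ℝ) (‖b‖⁻¹ • b) = 1 := by
    rw [nfun_self (by rw [← norm_pos_iff, hub]; norm_num), hub]
  have hstab := norming_stab τ hτ_pos hX_us hua hub
    (le_of_eq (nfun_norm (by rw [← norm_pos_iff, hua]; norm_num)))
    haa
    (le_of_eq (nfun_norm (by rw [← norm_pos_iff, hub]; norm_num)))
    hbb hθ2
  rw [nfun_unit τ hτ_pos hX_us ha0, nfun_unit τ hτ_pos hX_us hb0] at hstab
  have hdist := unit_sub_bound (X := X) hr ha hb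
  calc ‖nfun a - nfun b‖ ≤ θ/2 + ‖‖a‖⁻¹ • a - ‖b‖⁻¹ • b‖ / τ (θ/2) := hstab
    _ ≤ θ/2 + (2 * ‖a - b‖ / r) / τ (θ/2) := by gcongr
    _ ≤ θ/2 + (2 * ((θ/2) * τ (θ/2) * r / 4) / r) / τ (θ/2) := by gcongr
    _ ≤ θ := by
        have hq : (2 * ((θ/2) * τ (θ/2) * r / 4) / r) / τ (θ/2) = θ/4 := by
          field_simp
        rw [hq]; linarith

lemma nfun_nonneg_of_norm_le {u w : X} (hu : u ≠ 0) {lam₀ : ℝ} (hlam₀ : 0 < lam₀)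
    (h : ∀ lam : ℝ, 0 < lam → lam ≤ lam₀ → ‖u‖ ≤ ‖u + lam • w‖) : 0 ≤ nfun u w := by
  rcases eq_or_ne w 0 with rfl | hw0
  · simp
  have hnu : (0:ℝ) < ‖u‖ := norm_pos_iff.mpr hu
  have hnw : (0:ℝ) < ‖w‖ := norm_pos_iff.mpr hw0
  rw [← neg_zero, ← neg_le]
  apply le_of_forall_pos_le_add
  intro ε hε
  obtain ⟨δ, hδ, hstab⟩ := nfun_stab_annulus τ hτ_pos hX_us
    (show (0:ℝ) < ‖u‖/2 by linarith) (show (0:ℝ) < ε / ‖w‖ by positivity)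
  set lam : ℝ := min lam₀ (min (‖u‖ / (2 * ‖w‖)) (δ / ‖w‖)) with hlam
  have hlam_pos : 0 < lam := lt_min hlam₀ (lt_min (by positivity) (by positivity))
  have hlam_le : lam ≤ lam₀ := min_le_left _ _
  have hlam_le2 : lam ≤ ‖u‖ / (2 * ‖w‖) := le_trans (min_le_right _ _) (min_le_left _ _)
  have hlam_le3 : lam ≤ δ / ‖w‖ := le_trans (min_le_right _ _) (min_le_right _ _)
  set b : X := u + lam • w with hbdef
  have hub : ‖b - u‖ = lam * ‖w‖ := by
    rw [hbdef]
    simp [norm_smul, Real.norm_eq_abs, abs_of_pos hlam_pos]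
  have hs1 : lam * ‖w‖ ≤ ‖u‖/2 := by
    calc lam * ‖w‖ ≤ (‖u‖ / (2 * ‖w‖)) * ‖w‖ := by
          apply mul_le_mul_of_nonneg_right hlam_le2 (norm_nonneg _)
      _ = ‖u‖/2 := by field_simp
  have hs2 : lam * ‖w‖ ≤ δ := by
    calc lam * ‖w‖ ≤ (δ / ‖w‖) * ‖w‖ := by
          apply mul_le_mul_of_nonneg_right hlam_le3 (norm_nonneg _)
      _ = δ := by field_simp
  have hbu : ‖u‖ ≤ ‖b‖ := h lam hlam_pos hlam_le
  have hbr : ‖u‖/2 ≤ ‖b‖ := by linarith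
  have hur : ‖u‖/2 ≤ ‖u‖ := by linarith
  have hb0 : b ≠ 0 := by
    intro hz
    rw [hz, norm_zero] at hbu
    linarith
  have hclose : ‖nfun b - nfun u‖ ≤ ε / ‖w‖ := by
    apply hstab b u hbr hur
    calc ‖b - u‖ = lam * ‖w‖ := hub
      _ ≤ δ := hs2
  have hgw : 0 ≤ (nfun b : X →L[ℝ] ℝ) w := by
    have hgb : (nfun b : X →L[ℝ] ℝ) b = ‖b‖ := nfun_self hb0
    have hgu : (nfun b : X →L[ℝ] ℝ) u ≤ ‖u‖ := by
      calc (nfun b : X →L[ℝ] ℝ) u ≤ ‖(nfun b : X →L[ℝ] ℝ) u‖ := le_abs_self _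
        _ ≤ ‖(nfun b : X →L[ℝ] ℝ)‖ * ‖u‖ := (nfun b).le_opNorm _
        _ = ‖u‖ := by rw [nfun_norm hb0, one_mul]
    have hexp : (nfun b : X →L[ℝ] ℝ) b = (nfun b : X →L[ℝ] ℝ) u + lam * (nfun b : X →L[ℝ] ℝ) w := by
      rw [hbdef, map_add, map_smul]; simp
    nlinarith [hbu]
  have hdiff : (nfun u : X →L[ℝ] ℝ) w ≥ (nfun b : X →L[ℝ] ℝ) w - (ε / ‖w‖) * ‖w‖ := by
    have : ((nfun b - nfun u : X →L[ℝ] ℝ)) w ≤ (ε / ‖w‖) * ‖w‖ := by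
      calc ((nfun b - nfun u : X →L[ℝ] ℝ)) w ≤ ‖((nfun b - nfun u : X →L[ℝ] ℝ)) w‖ := le_abs_self _
        _ ≤ ‖(nfun b - nfun u : X →L[ℝ] ℝ)‖ * ‖w‖ := (nfun b - nfun u).le_opNorm _
        _ ≤ (ε / ‖w‖) * ‖w‖ := mul_le_mul_of_nonneg_right hclose (norm_nonneg _)
    have hexp : ((nfun b - nfun u : X →L[ℝ] ℝ)) w = (nfun b : X →L[ℝ] ℝ) w - (nfun u : X →L[ℝ] ℝ) w := by simp
    linarith [hexp ▸ this]
  have hεw : (ε / ‖w‖) * ‖w‖ = ε := by field_simp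
  linarith [hεw ▸ hdiff]

lemma good_uniq {x v v' : X}
    (h1 : v' ≠ v → 0 ≤ nfun (v - v') (x - v))
    (h2 : v ≠ v' → 0 ≤ nfun (v' - v) (x - v')) : v = v' := by
  by_cases hvv : v = v'
  · exact hvv
  have hne : v - v' ≠ 0 := sub_ne_zero.mpr hvv
  have ha := h1 (Ne.symm hvv)
  have hb := h2 hvv
  have hneg : nfun (v' - v) = -(nfun (v - v') : X →L[ℝ] ℝ) := by
    rw [show v' - v = -(v - v') by abel]
    exact nfun_neg τ hτ_pos hX_us hne
  rw [hneg] at hb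
  simp only [ContinuousLinearMap.neg_apply] at hb
  have hc : (nfun (v - v') : X →L[ℝ] ℝ) (x - v') ≤ 0 := by linarith
  have hd : (nfun (v - v') : X →L[ℝ] ℝ) ((x - v) - (x - v')) ≥ 0 := by
    rw [map_sub]; linarith
  rw [show (x - v) - (x - v') = -(v - v') by abel, map_neg] at hd
  rw [nfun_self hne] at hd
  have : ‖v - v'‖ ≤ 0 := by linarith
  exact absurd (norm_pos_iff.mpr hne) (not_lt.mpr this)

end

set_option maxHeartbeats 2000000 in
open Filter in
theorem sunny_nonexpansive_retraction_onto_zeros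
    {X : Type*} [NormedAddCommGroup X] [NormedSpace ℝ X] [CompleteSpace X]
    (η : ℝ → ℝ) (hη_range : ∀ ε : ℝ, 0 < ε → ε ≤ 2 → 0 < η ε ∧ η ε ≤ 1)
    (hX_uc : ∀ ε : ℝ, 0 < ε → ε ≤ 2 → ∀ x y : X, ‖x‖ ≤ 1 → ‖y‖ ≤ 1 →
      ε ≤ ‖x - y‖ → ‖(1 / 2 : ℝ) • (x + y)‖ ≤ 1 - η ε)
    (τ : ℝ → ℝ) (hτ_pos : ∀ ε : ℝ, 0 < ε → 0 < τ ε)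
    (hX_us : ∀ ε : ℝ, 0 < ε → ∀ x y : X, ‖x‖ = 1 → ‖y‖ ≤ τ ε →
      ‖x + y‖ + ‖x - y‖ ≤ 2 + ε * ‖y‖)
    (C : Set X) (hC_closed : IsClosed C) (hC_convex : Convex ℝ C)
    (hC_bdd : Bornology.IsBounded C) (hC_ne : C.Nonempty)
    (A : Set (X × X))
    (hA_acc : ∀ lam : ℝ, 0 < lam → ∀ p ∈ A, ∀ q ∈ A,
      ‖p.1 - q.1‖ ≤ ‖p.1 - q.1 + lam • (p.2 - q.2)‖)
    (J : ℝ → X → X)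
    (hJ : ∀ lam : ℝ, 0 < lam → ∀ y ∈ C,
      J lam y ∈ C ∧ (J lam y, (1 / lam) • (y - J lam y)) ∈ A)
    (F : Set X) (hF : F = {p ∈ C | (p, (0 : X)) ∈ A}) :
    F.Nonempty ∧
    ∃ Q : X → X,
      (∀ x ∈ C, Q x ∈ F) ∧
      (∀ x ∈ C, ∀ lamSeq : ℕ → ℝ, (∀ n, 0 < lamSeq n) →
        Filter.Tendsto lamSeq Filter.atTop Filter.atTop →
        Filter.Tendsto (fun n => J (lamSeq n) x) Filter.atTop (nhds (Q x))) ∧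
      (∀ p ∈ F, Q p = p) ∧
      (∀ x ∈ C, ∀ y ∈ C, ‖Q x - Q y‖ ≤ ‖x - y‖) ∧
      (∀ x ∈ C, ∀ t : ℝ, 0 ≤ t → Q x + t • (x - Q x) ∈ C →
        Q (Q x + t • (x - Q x)) = Q x) ∧
      (∀ Q' : X → X,
        (∀ x ∈ C, Q' x ∈ F) →
        (∀ p ∈ F, Q' p = p) →
        (∀ x ∈ C, ∀ y ∈ C, ‖Q' x - Q' y‖ ≤ ‖x - y‖) →
        (∀ x ∈ C, ∀ t : ℝ, 0 ≤ t → Q' x + t • (x - Q' x) ∈ C →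
          Q' (Q' x + t • (x - Q' x)) = Q' x) →
        ∀ x ∈ C, Q' x = Q x) := by
  subst hF
  -- diameter bound
  obtain ⟨M, hM⟩ : ∃ M : ℝ, ∀ x ∈ C, ∀ y ∈ C, ‖x - y‖ ≤ M := by
    obtain ⟨M, hM⟩ := Metric.isBounded_iff.mp hC_bdd
    exact ⟨M, fun x hx y hy => by rw [← dist_eq_norm]; exact hM hx hy⟩
  have hM0 : (0:ℝ) ≤ M := by
    obtain ⟨c, hc⟩ := hC_ne
    simpa using hM c hc c hc
  -- resolvent uniqueness
  have RU : ∀ lam : ℝ, 0 < lam → ∀ y u u' : X,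
      (u, (1/lam) • (y - u)) ∈ A → (u', (1/lam) • (y - u')) ∈ A → u = u' := by
    intro lam hlam y u u' hu hu'
    have := hA_acc lam hlam _ hu _ hu'
    simp only at this
    have heq : u - u' + lam • ((1/lam) • (y - u) - (1/lam) • (y - u')) = 0 := by
      rw [smul_sub, smul_smul, smul_smul, mul_one_div_cancel (ne_of_gt hlam), one_smul, one_smul]
      abel
    rw [heq, norm_zero] at this
    exact sub_eq_zero.mp (norm_le_zero_iff.mp this)
  -- J fixes zeros
  have hJfix : ∀ lam : ℝ, 0 < lam → ∀ p ∈ C, (p, (0:X)) ∈ A → J lam p = p := by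
    intro lam hlam p hpC hpA
    apply RU lam hlam p _ _ (hJ lam hlam p hpC).2
    have h0 : (1/lam) • (p - p) = (0:X) := by simp
    rw [h0]
    exact hpA
  -- J nonexpansive on C
  have hJne : ∀ lam : ℝ, 0 < lam → ∀ y ∈ C, ∀ y' ∈ C,
      ‖J lam y - J lam y'‖ ≤ ‖y - y'‖ := by
    intro lam hlam y hy y' hy'
    have := hA_acc lam hlam _ (hJ lam hlam y hy).2 _ (hJ lam hlam y' hy').2
    simp only at this
    have heq : J lam y - J lam y' +
        lam • ((1/lam) • (y - J lam y) - (1/lam) • (y' - J lam y')) = y - y' := by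
      rw [smul_sub, smul_smul, smul_smul, mul_one_div_cancel (ne_of_gt hlam), one_smul, one_smul]
      abel
    rwa [heq] at this
  -- resolvent identity
  have RI : ∀ s lam : ℝ, 0 < s → s ≤ lam → ∀ y ∈ C,
      ((s/lam) • y + (1 - s/lam) • J lam y) ∈ C ∧
      J s ((s/lam) • y + (1 - s/lam) • J lam y) = J lam y := by
    intro s lam hs hsl y hy
    have hlam : 0 < lam := lt_of_lt_of_le hs hsl
    have hsl1 : s/lam ≤ 1 := by
      rw [div_le_one hlam]; exact hsl
    have hsl0 : 0 ≤ s/lam := le_of_lt (by positivity)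
    have hzC : ((s/lam) • y + (1 - s/lam) • J lam y) ∈ C := by
      exact hC_convex (a := s/lam) (b := 1 - s/lam) hy (hJ lam hlam y hy).1 hsl0
        (by linarith) (by ring)
    refine ⟨hzC, ?_⟩
    apply RU s hs _ _ _ (hJ s hs _ hzC).2
    have heq : (1/s) • (((s/lam) • y + (1 - s/lam) • J lam y) - J lam y)
        = (1/lam) • (y - J lam y) := by
      have h1 : ((s/lam) • y + (1 - s/lam) • J lam y) - J lam y
          = (s/lam) • (y - J lam y) := by
        rw [smul_sub]; module
      rw [h1, smul_smul]
      congr 1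
      field_simp
    rw [heq]
    exact (hJ lam hlam y hy).2
  -- accretivity in terms of norming functionals
  have hacc_nf : ∀ lam : ℝ, 0 < lam → ∀ y ∈ C, ∀ p ∈ C, (p, (0:X)) ∈ A →
      J lam y ≠ p → 0 ≤ nfun (J lam y - p) (y - J lam y) := by
    intro lam hlam y hy p hpC hpA hne
    apply nfun_nonneg_of_norm_le τ hτ_pos hX_us (sub_ne_zero.mpr hne) one_pos
    intro mu hmu _
    have := hA_acc (mu * lam) (by positivity) _ (hJ lam hlam y hy).2 (p, 0) hpA
    simp only at this
    have heq : J lam y - p + (mu * lam) • ((1/lam) • (y - J lam y) - 0)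
        = J lam y - p + mu • (y - J lam y) := by
      rw [sub_zero, smul_smul]
      congr 2
      field_simp
    rwa [heq] at this
  -- the Good predicate packaged as existence
  have core : ∀ x ∈ C, ∀ t : ℕ → ℝ, (∀ n, 0 < t n) → Tendsto t atTop atTop →
      ∃ v : X, (v ∈ C ∧ (v, (0:X)) ∈ A ∧
        (∀ p ∈ C, (p, (0:X)) ∈ A → p ≠ v → 0 ≤ nfun (v - p) (x - v))) ∧
      ∃ ms : ℕ → ℕ, Tendsto (fun k => J (t (ms k)) x) atTop (nhds v) := by
    intro x hx t ht0 htop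
    set xs : ℕ → X := fun n => J (t n) x with hxs
    have hxsC : ∀ n, xs n ∈ C := fun n => (hJ (t n) (ht0 n) x hx).1
    have hbM : ∀ z ∈ C, ∀ n, ‖xs n - z‖ ≤ M := fun z hz n => hM _ (hxsC n) z hz
    set φ : X → ℝ := fun z => Filter.limsup (fun n => ‖xs n - z‖) Filter.atTop with hφdef
    have hBdd : ∀ z ∈ C, IsBoundedUnder (· ≤ ·) atTop (fun n => ‖xs n - z‖) :=
      fun z hz => isBoundedUnder_of ⟨M, fun n => hbM z hz n⟩
    have hCob : ∀ z ∈ C, IsCoboundedUnder (· ≤ ·) atTop (fun n => ‖xs n - z‖) :=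
      fun z _ => Filter.isCoboundedUnder_le_of_le atTop (fun n => norm_nonneg _)
    have L1 : ∀ z ∈ C, ∀ a : ℝ, (∀ᶠ n in atTop, ‖xs n - z‖ ≤ a) → φ z ≤ a :=
      fun z hz a h => Filter.limsup_le_of_le (hCob z hz) h
    have L2 : ∀ z ∈ C, ∀ a : ℝ, φ z < a → ∀ᶠ n in atTop, ‖xs n - z‖ < a :=
      fun z hz a h => Filter.eventually_lt_of_limsup_lt h (hBdd z hz)
    have hφ0 : ∀ z ∈ C, 0 ≤ φ z := fun z hz =>
      Filter.le_limsup_of_frequently_le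
        (Filter.Frequently.of_forall (fun n => norm_nonneg _)) (hBdd z hz)
    set S : Set ℝ := φ '' C with hSdef
    have hSne : S.Nonempty := ⟨φ x, x, hx, rfl⟩
    have hSbd : BddBelow S := ⟨0, by rintro a ⟨z, hz, rfl⟩; exact hφ0 z hz⟩
    set d : ℝ := sInf S with hddef
    have hd_le : ∀ z ∈ C, d ≤ φ z := fun z hz => csInf_le hSbd ⟨z, hz, rfl⟩
    have hd0 : 0 ≤ d := le_csInf hSne (by rintro a ⟨z, hz, rfl⟩; exact hφ0 z hz)
    -- key uniform convexity lemma
    have KL : ∀ δ : ℝ, 0 < δ → ∃ ε : ℝ, 0 < ε ∧ ∀ u ∈ C, ∀ v ∈ C,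
        φ u ≤ d + ε → φ v ≤ d + ε → ‖u - v‖ ≤ δ := by
      intro δ hδ
      by_cases hcase : d < δ/4
      · refine ⟨(δ - 2*d)/4, by linarith, ?_⟩
        intro u hu v hv hφu hφv
        have hεpos : (0:ℝ) < (δ - 2*d)/4 := by linarith
        have hu' : ∀ᶠ n in atTop, ‖xs n - u‖ < d + 2*((δ - 2*d)/4) :=
          L2 u hu _ (by linarith)
        have hv' : ∀ᶠ n in atTop, ‖xs n - v‖ < d + 2*((δ - 2*d)/4) :=
          L2 v hv _ (by linarith)
        obtain ⟨n, h1, h2⟩ := (hu'.and hv').exists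
        have h3 : ‖u - v‖ ≤ ‖xs n - u‖ + ‖xs n - v‖ := by
          have h4 : u - v = (xs n - v) - (xs n - u) := by abel
          rw [h4]
          calc ‖(xs n - v) - (xs n - u)‖ ≤ ‖xs n - v‖ + ‖xs n - u‖ := norm_sub_le _ _
            _ = ‖xs n - u‖ + ‖xs n - v‖ := by ring
        linarith
      · push_neg at hcase
        have hd_pos : 0 < d := lt_of_lt_of_le (by linarith) hcase
        have hδ4d : δ ≤ 4*d := by linarith
        set ε₁ : ℝ := δ/(2*d) with hε₁
        have hε₁pos : 0 < ε₁ := by positivity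
        have hε₁2 : ε₁ ≤ 2 := by
          rw [hε₁, div_le_iff₀ (by positivity)]
          linarith
        obtain ⟨hη₀pos, hη₀1⟩ := hη_range ε₁ hε₁pos hε₁2
        refine ⟨d * η ε₁ / 4, by positivity, ?_⟩
        intro u hu v hv hφu hφv
        by_contra hgt
        push_neg at hgt
        set ε : ℝ := d * η ε₁ / 4 with hε
        set R : ℝ := d + 2*ε with hR
        have hRpos : 0 < R := by rw [hR]; positivity
        have hR2d : R ≤ 2*d := by
          rw [hR, hε]; nlinarith
        set m : X := (1/2 : ℝ) • u + (1/2 : ℝ) • v with hm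
        have hmC : m ∈ C := hC_convex (a := (1/2:ℝ)) (b := (1/2:ℝ)) hu hv
            (by norm_num) (by norm_num) (by norm_num)
        have hεpos : 0 < ε := by rw [hε]; positivity
        have hφuR : φ u < R := by rw [hR]; linarith
        have hφvR : φ v < R := by rw [hR]; linarith
        have hev : ∀ᶠ n in atTop, ‖xs n - m‖ ≤ R * (1 - η ε₁) := by
          filter_upwards [L2 u hu R hφuR, L2 v hv R hφvR] with n h1 h2
          have hx1 : ‖R⁻¹ • (xs n - u)‖ ≤ 1 := by
            rw [norm_smul, Real.norm_eq_abs, abs_of_pos (inv_pos.mpr hRpos)]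
            rw [inv_mul_le_iff₀ hRpos]
            linarith
          have hx2 : ‖R⁻¹ • (xs n - v)‖ ≤ 1 := by
            rw [norm_smul, Real.norm_eq_abs, abs_of_pos (inv_pos.mpr hRpos)]
            rw [inv_mul_le_iff₀ hRpos]
            linarith
          have hx3 : ε₁ ≤ ‖R⁻¹ • (xs n - u) - R⁻¹ • (xs n - v)‖ := by
            have : R⁻¹ • (xs n - u) - R⁻¹ • (xs n - v) = R⁻¹ • (v - u) := by
              rw [← smul_sub]; congr 1; abel
            rw [this, norm_smul, Real.norm_eq_abs, abs_of_pos (inv_pos.mpr hRpos)]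
            have hA1 : δ/(2*d) ≤ δ/R := by gcongr
            have hA2 : δ/R ≤ ‖v - u‖/R := by
              gcongr
              rw [norm_sub_rev]
              linarith
            calc ε₁ = δ/(2*d) := hε₁
              _ ≤ δ/R := hA1
              _ ≤ ‖v - u‖/R := hA2
              _ = R⁻¹ * ‖v - u‖ := by rw [div_eq_inv_mul]
          have := hX_uc ε₁ hε₁pos hε₁2 _ _ hx1 hx2 hx3
          have heq : (1/2 : ℝ) • (R⁻¹ • (xs n - u) + R⁻¹ • (xs n - v))
              = R⁻¹ • (xs n - m) := by
            rw [hm]; module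
          rw [heq] at this
          rw [norm_smul, Real.norm_eq_abs, abs_of_pos (inv_pos.mpr hRpos)] at this
          rw [inv_mul_le_iff₀ hRpos] at this
          linarith [this]
        have hφm : φ m ≤ R * (1 - η ε₁) := L1 m hmC _ hev
        have hcontra : R * (1 - η ε₁) < d := by
          rw [hR, hε]; nlinarith
        linarith [hd_le m hmC]
    -- minimizing sequence
    have hmin : ∀ k : ℕ, ∃ w, w ∈ C ∧ φ w < d + 1/(k+1) := by
      intro k
      have hlt : d < d + 1/((k:ℝ)+1) := by
        have : (0:ℝ) < 1/((k:ℝ)+1) := by positivity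
        linarith
      obtain ⟨a, ⟨z, hz, rfl⟩, ha⟩ := exists_lt_of_csInf_lt hSne hlt
      exact ⟨z, hz, ha⟩
    choose w hwC hwφ using hmin
    have hcauchy : CauchySeq w := by
      rw [Metric.cauchySeq_iff']
      intro δ hδ
      obtain ⟨ε, hεpos, hKL⟩ := KL (δ/2) (by linarith)
      obtain ⟨N, hN⟩ := exists_nat_one_div_lt (K := ℝ) hεpos
      refine ⟨N, fun n hn => ?_⟩
      rw [dist_eq_norm]
      have hmono : 1/((n:ℝ)+1) ≤ 1/((N:ℝ)+1) :=
        one_div_le_one_div_of_le (by positivity)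
          (by exact_mod_cast Nat.succ_le_succ hn)
      have h1 : φ (w n) ≤ d + ε := by linarith [hwφ n]
      have h2 : φ (w N) ≤ d + ε := by linarith [hwφ N]
      have := hKL (w n) (hwC n) (w N) (hwC N) h1 h2
      linarith
    obtain ⟨v, hv_lim⟩ := cauchySeq_tendsto_of_complete hcauchy
    have hvC : v ∈ C := hC_closed.mem_of_tendsto hv_lim
      (Filter.Eventually.of_forall hwC)
    -- Lipschitz property of φ
    have L4 : ∀ z ∈ C, ∀ z' ∈ C, φ z ≤ φ z' + ‖z - z'‖ := by
      intro z hz z' hz'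
      apply le_of_forall_pos_le_add
      intro ε'' hε''
      have hev := L2 z' hz' (φ z' + ε'') (by linarith)
      apply L1 z hz
      filter_upwards [hev] with n hn
      calc ‖xs n - z‖ ≤ ‖xs n - z'‖ + ‖z' - z‖ := by
            have h5 : xs n - z = (xs n - z') + (z' - z) := by abel
            rw [h5]; exact norm_add_le _ _
        _ ≤ (φ z' + ε'') + ‖z' - z‖ := by linarith
        _ = φ z' + ‖z - z'‖ + ε'' := by rw [norm_sub_rev]; ring
    have hφvle : φ v ≤ d := by
      apply le_of_forall_pos_le_add
      intro ε' hε'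
      obtain ⟨k₁, hk₁⟩ := exists_nat_one_div_lt (K := ℝ) (show (0:ℝ) < ε'/2 by linarith)
      obtain ⟨N, hN⟩ := Metric.tendsto_atTop.mp hv_lim (ε'/2) (by linarith)
      set k := max N k₁ with hk
      have hdist : dist (w k) v < ε'/2 := hN k (le_max_left _ _)
      have hkk : 1/((k:ℝ)+1) < ε'/2 := by
        have hmono : 1/((k:ℝ)+1) ≤ 1/((k₁:ℝ)+1) :=
          one_div_le_one_div_of_le (by positivity)
            (by exact_mod_cast Nat.succ_le_succ (le_max_right N k₁))
        linarith
      have hnv : ‖v - w k‖ < ε'/2 := by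
        rw [← dist_eq_norm, dist_comm]
        exact hdist
      calc φ v ≤ φ (w k) + ‖v - w k‖ := L4 v hvC (w k) (hwC k)
        _ ≤ d + 1/((k:ℝ)+1) + ‖v - w k‖ := by linarith [hwφ k]
        _ ≤ d + ε' := by linarith
    have hφv_eq : φ v = d := le_antisymm hφvle (hd_le v hvC)
    have huniq_min : ∀ u ∈ C, φ u ≤ d → u = v := by
      intro u hu hφu
      have h0 : ∀ δ : ℝ, 0 < δ → ‖u - v‖ ≤ δ := by
        intro δ hδ
        obtain ⟨ε, hεpos, hKL⟩ := KL δ hδ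
        exact hKL u hu v hvC (by linarith) (by linarith)
      have h1 : ‖u - v‖ ≤ 0 :=
        le_of_forall_pos_le_add (by intro ε hε; simpa using h0 ε hε)
      exact sub_eq_zero.mp (norm_le_zero_iff.mp h1)
    -- v is a fixed point of all resolvents
    have hJv : ∀ s : ℝ, 0 < s → J s v = v := by
      intro s hs
      apply huniq_min _ (hJ s hs v hvC).1
      apply le_of_forall_pos_le_add
      intro ε' hε'
      have hev1 : ∀ᶠ n in atTop, s ≤ t n := htop.eventually_ge_atTop s
      have hdiv : Tendsto (fun n => s / t n * M) atTop (nhds 0) := by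
        have h0 : Tendsto (fun n => s / t n) atTop (nhds 0) :=
          Filter.Tendsto.div_atTop tendsto_const_nhds htop
        have h1 := h0.mul_const M
        rw [zero_mul] at h1
        exact h1
      have hev2 : ∀ᶠ n in atTop, s / t n * M < ε'/2 :=
        hdiv.eventually_lt_const (by linarith)
      have hev3 : ∀ᶠ n in atTop, ‖xs n - v‖ < d + ε'/2 := by
        apply L2 v hvC
        rw [hφv_eq]
        linarith
      apply L1 _ (hJ s hs v hvC).1
      filter_upwards [hev1, hev2, hev3] with n h1 h2 h3
      have hRI := RI s (t n) hs h1 x hx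
      have hst : 0 < s / t n := div_pos hs (ht0 n)
      have hxz : J s ((s/(t n)) • x + (1 - s/(t n)) • xs n) = xs n := hRI.2
      have hzv : ‖((s/(t n)) • x + (1 - s/(t n)) • xs n) - v‖
          ≤ ‖xs n - v‖ + s/(t n) * M := by
        have hzeq : ((s/(t n)) • x + (1 - s/(t n)) • xs n) - v
            = (xs n - v) + (s/(t n)) • (x - xs n) := by module
        rw [hzeq]
        have hb1 : ‖(s/(t n)) • (x - xs n)‖ ≤ s/(t n) * M := by
          rw [norm_smul, Real.norm_eq_abs, abs_of_pos hst]
          exact mul_le_mul_of_nonneg_left (hM x hx _ (hxsC n)) (le_of_lt hst)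
        calc ‖(xs n - v) + (s/(t n)) • (x - xs n)‖
            ≤ ‖xs n - v‖ + ‖(s/(t n)) • (x - xs n)‖ := norm_add_le _ _
          _ ≤ ‖xs n - v‖ + s/(t n) * M := by linarith
      calc ‖xs n - J s v‖ = ‖J s ((s/(t n)) • x + (1 - s/(t n)) • xs n) - J s v‖ := by
            rw [hxz]
        _ ≤ ‖((s/(t n)) • x + (1 - s/(t n)) • xs n) - v‖ := hJne s hs _ hRI.1 v hvC
        _ ≤ ‖xs n - v‖ + s/(t n) * M := hzv
        _ ≤ d + ε' := by linarith
    have hvA : (v, (0:X)) ∈ A := by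
      have h1 := (hJ 1 one_pos v hvC).2
      rw [hJv 1 one_pos] at h1
      simpa using h1
    have hxsJ : ∀ n, xs n = J (t n) x := fun n => by rw [hxs]
    -- frequently close to v
    have hfreq : ∀ ε₀ : ℝ, 0 < ε₀ → ∃ᶠ n in atTop, ‖xs n - v‖ < ε₀ := by
      intro ε₀ hε₀
      by_contra hcon
      rw [Filter.not_frequently] at hcon
      have hev : ∀ᶠ n in atTop, ε₀ ≤ ‖xs n - v‖ := by
        filter_upwards [hcon] with n hn
        exact le_of_not_gt hn
      by_cases hxv : x = v
      · have hfix : ∀ n, xs n = x := fun n => by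
          rw [hxsJ n]
          exact hJfix (t n) (ht0 n) x hx (by rw [hxv]; exact hvA)
        obtain ⟨n, hn⟩ := hev.exists
        rw [hfix n, hxv, sub_self, norm_zero] at hn
        linarith
      · have hxvnorm : 0 < ‖x - v‖ := norm_pos_iff.mpr (sub_ne_zero.mpr hxv)
        have hxvM : ‖x - v‖ ≤ M := hM x hx v hvC
        obtain ⟨δ, hδpos, hstab⟩ := nfun_stab_annulus τ hτ_pos hX_us
          (show (0:ℝ) < ε₀/2 by linarith) (show (0:ℝ) < ε₀/(2*(M+1)) by positivity)
        set tt : ℝ := min 1 (min δ (ε₀/2) / ‖x - v‖) with htt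
        have hmin_pos : 0 < min δ (ε₀/2) := lt_min hδpos (by linarith)
        have htt_pos : 0 < tt := lt_min one_pos (by positivity)
        have htt1 : tt ≤ 1 := min_le_left _ _
        have httxv : tt * ‖x - v‖ ≤ min δ (ε₀/2) := by
          calc tt * ‖x - v‖ ≤ (min δ (ε₀/2) / ‖x - v‖) * ‖x - v‖ :=
              mul_le_mul_of_nonneg_right (min_le_right _ _) (norm_nonneg _)
            _ = min δ (ε₀/2) := by field_simp
        set vt : X := v + tt • (x - v) with hvt
        have hvtC : vt ∈ C := by
          have h := hC_convex (a := 1 - tt) (b := tt) hvC hx (by linarith)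
            (le_of_lt htt_pos) (by ring)
          have heq : vt = (1 - tt) • v + tt • x := by rw [hvt]; module
          rw [heq]; exact h
        have hptwise : ∀ᶠ n in atTop, ‖xs n - vt‖ ≤ ‖xs n - v‖ - tt * (ε₀/2) := by
          filter_upwards [hev] with n hn
          have hbn : xs n ≠ v := by
            intro h; rw [h, sub_self, norm_zero] at hn; linarith
          have hvtv : vt - v = tt • (x - v) := by rw [hvt]; abel
          have hvtv_norm : ‖vt - v‖ = tt * ‖x - v‖ := by
            rw [hvtv, norm_smul, Real.norm_eq_abs, abs_of_pos htt_pos]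
          have ha_norm : ε₀/2 ≤ ‖xs n - vt‖ := by
            have h8 : ‖xs n - v‖ ≤ ‖xs n - vt‖ + ‖vt - v‖ := by
              calc ‖xs n - v‖ = ‖(xs n - vt) + (vt - v)‖ := by congr 1; abel
                _ ≤ ‖xs n - vt‖ + ‖vt - v‖ := norm_add_le _ _
            have h9 : tt * ‖x - v‖ ≤ ε₀/2 := le_trans httxv (min_le_right _ _)
            rw [hvtv_norm] at h8
            linarith
          have ha0 : xs n - vt ≠ 0 := by
            intro h; rw [h, norm_zero] at ha_norm; linarith
          have hfn : 0 ≤ nfun (xs n - v) (x - xs n) := by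
            rw [hxsJ n]
            apply hacc_nf (t n) (ht0 n) x hx v hvC hvA
            rw [← hxsJ n]; exact hbn
          have hfnxv : ε₀ ≤ nfun (xs n - v) (x - v) := by
            have heq : (x - v) = (x - xs n) + (xs n - v) := by abel
            rw [heq, map_add, nfun_self (sub_ne_zero.mpr hbn)]
            linarith
          have hclose : ‖nfun (xs n - vt) - nfun (xs n - v)‖ ≤ ε₀/(2*(M+1)) := by
            apply hstab _ _ ha_norm (by linarith : ε₀/2 ≤ ‖xs n - v‖)
            have heq : (xs n - vt) - (xs n - v) = -(vt - v) := by abel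
            rw [heq, norm_neg, hvtv_norm]
            exact le_trans httxv (min_le_left _ _)
          have hbound : (ε₀/(2*(M+1))) * ‖x - v‖ ≤ ε₀/2 := by
            rw [div_mul_eq_mul_div, div_le_iff₀ (by positivity : (0:ℝ) < 2*(M+1))]
            nlinarith
          have hfa : ε₀/2 ≤ nfun (xs n - vt) (x - v) := by
            have hd1 : nfun (xs n - v) (x - v) - nfun (xs n - vt) (x - v)
                ≤ (ε₀/(2*(M+1))) * ‖x - v‖ := by
              have he1 : nfun (xs n - v) (x - v) - nfun (xs n - vt) (x - v)
                  = ((nfun (xs n - v) - nfun (xs n - vt) : X →L[ℝ] ℝ)) (x - v) := by simp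
              rw [he1]
              calc ((nfun (xs n - v) - nfun (xs n - vt) : X →L[ℝ] ℝ)) (x - v)
                  ≤ ‖((nfun (xs n - v) - nfun (xs n - vt) : X →L[ℝ] ℝ)) (x - v)‖ :=
                    le_abs_self _
                _ ≤ ‖(nfun (xs n - v) - nfun (xs n - vt) : X →L[ℝ] ℝ)‖ * ‖x - v‖ :=
                    ContinuousLinearMap.le_opNorm _ _
                _ ≤ (ε₀/(2*(M+1))) * ‖x - v‖ := by
                    apply mul_le_mul_of_nonneg_right _ (norm_nonneg _)
                    rw [norm_sub_rev]
                    exact hclose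
            linarith
          have h12 : nfun (xs n - vt) (xs n - v) ≤ ‖xs n - v‖ := by
            calc (nfun (xs n - vt) : X →L[ℝ] ℝ) (xs n - v)
                ≤ ‖(nfun (xs n - vt) : X →L[ℝ] ℝ) (xs n - v)‖ := le_abs_self _
              _ ≤ ‖(nfun (xs n - vt) : X →L[ℝ] ℝ)‖ * ‖xs n - v‖ :=
                  ContinuousLinearMap.le_opNorm _ _
              _ = ‖xs n - v‖ := by rw [nfun_norm ha0, one_mul]
          have ha_eq : xs n - vt = (xs n - v) - tt • (x - v) := by rw [hvt]; abel
          have hkey : (nfun (xs n - vt) : X →L[ℝ] ℝ) (xs n - vt)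
              = (nfun (xs n - vt) : X →L[ℝ] ℝ) (xs n - v)
                - tt * (nfun (xs n - vt) : X →L[ℝ] ℝ) (x - v) := by
            nth_rewrite 2 [ha_eq]
            rw [map_sub, map_smul, smul_eq_mul]
          have hself : (nfun (xs n - vt) : X →L[ℝ] ℝ) (xs n - vt) = ‖xs n - vt‖ :=
            nfun_self ha0
          have htmul : tt * (ε₀/2) ≤ tt * (nfun (xs n - vt) : X →L[ℝ] ℝ) (x - v) :=
            mul_le_mul_of_nonneg_left hfa (le_of_lt htt_pos)
          linarith
        have hev4 : ∀ᶠ n in atTop, ‖xs n - v‖ < d + tt * (ε₀/4) := by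
          apply L2 v hvC
          rw [hφv_eq]
          have : 0 < tt * (ε₀/4) := by positivity
          linarith
        have hφvt : φ vt ≤ d - tt * (ε₀/4) := by
          apply L1 vt hvtC
          filter_upwards [hptwise, hev4] with n h1 h2
          have : tt * (ε₀/2) = tt * (ε₀/4) + tt * (ε₀/4) := by ring
          linarith
        have : 0 < tt * (ε₀/4) := by positivity
        linarith [hd_le vt hvtC]
    -- extract subsequence converging to v
    have hfreq' : ∀ k : ℕ, ∃ᶠ n in atTop, ‖xs n - v‖ < 1/((k:ℝ)+1) :=
      fun k => hfreq _ (by positivity)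
    obtain ⟨ms, hms_mono, hms⟩ := Filter.extraction_forall_of_frequently hfreq'
    have hms_tendsto : Tendsto (fun k => xs (ms k)) atTop (nhds v) := by
      rw [tendsto_iff_dist_tendsto_zero]
      apply squeeze_zero (fun k => dist_nonneg)
        (fun k => ?_) tendsto_one_div_add_atTop_nhds_zero_nat
      rw [dist_eq_norm]
      exact le_of_lt (hms k)
    -- variational inequality
    have hVI : ∀ p ∈ C, (p, (0:X)) ∈ A → p ≠ v → 0 ≤ nfun (v - p) (x - v) := by
      intro p hpC hpA hpv
      have hvp : v - p ≠ 0 := sub_ne_zero.mpr (Ne.symm hpv)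
      have hvpn : 0 < ‖v - p‖ := norm_pos_iff.mpr hvp
      have hxvM : ‖x - v‖ ≤ M := hM x hx v hvC
      have hkey : ∀ ε : ℝ, 0 < ε → -ε ≤ nfun (v - p) (x - v) := by
        intro ε hε
        obtain ⟨δ, hδpos, hstab⟩ := nfun_stab_annulus τ hτ_pos hX_us
          (show (0:ℝ) < ‖v - p‖/2 by linarith) (show (0:ℝ) < ε/(2*(M+1)) by positivity)
        set ρ : ℝ := min δ (min (‖v - p‖/2) (ε/2)) with hρ
        have hρpos : 0 < ρ := lt_min hδpos (lt_min (by linarith) (by linarith))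
        obtain ⟨N, hN⟩ := Metric.tendsto_atTop.mp hms_tendsto ρ hρpos
        set y : X := xs (ms N) with hy
        have hy_close : ‖y - v‖ < ρ := by
          rw [hy, ← dist_eq_norm]
          exact hN N le_rfl
        have hyC : y ∈ C := hxsC (ms N)
        have hyp_half : ‖v - p‖/2 ≤ ‖y - p‖ := by
          have h8 : ‖v - p‖ ≤ ‖v - y‖ + ‖y - p‖ := by
            calc ‖v - p‖ = ‖(v - y) + (y - p)‖ := by congr 1; abel
              _ ≤ ‖v - y‖ + ‖y - p‖ := norm_add_le _ _
          have h9 : ‖v - y‖ < ‖v - p‖/2 := by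
            rw [norm_sub_rev]
            exact lt_of_lt_of_le hy_close (le_trans (min_le_right _ _) (min_le_left _ _))
          linarith
        have hyp_ne : y ≠ p := by
          intro h
          rw [h, sub_self, norm_zero] at hyp_half
          linarith
        have hg : 0 ≤ nfun (y - p) (x - y) := by
          rw [hy, hxsJ (ms N)]
          apply hacc_nf (t (ms N)) (ht0 (ms N)) x hx p hpC hpA
          rw [← hxsJ (ms N), ← hy]
          exact hyp_ne
        have hclose : ‖nfun (y - p) - nfun (v - p)‖ ≤ ε/(2*(M+1)) := by
          apply hstab _ _ hyp_half (by linarith : ‖v - p‖/2 ≤ ‖v - p‖)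
          have heq : (y - p) - (v - p) = y - v := by abel
          rw [heq]
          exact le_of_lt (lt_of_lt_of_le hy_close (min_le_left _ _))
        have hbound : (ε/(2*(M+1))) * ‖x - v‖ ≤ ε/2 := by
          rw [div_mul_eq_mul_div, div_le_iff₀ (by positivity : (0:ℝ) < 2*(M+1))]
          nlinarith
        have hd1 : nfun (y - p) (x - v) - nfun (v - p) (x - v)
            ≤ (ε/(2*(M+1))) * ‖x - v‖ := by
          have he1 : nfun (y - p) (x - v) - nfun (v - p) (x - v)
              = ((nfun (y - p) - nfun (v - p) : X →L[ℝ] ℝ)) (x - v) := by simp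
          rw [he1]
          calc ((nfun (y - p) - nfun (v - p) : X →L[ℝ] ℝ)) (x - v)
              ≤ ‖((nfun (y - p) - nfun (v - p) : X →L[ℝ] ℝ)) (x - v)‖ := le_abs_self _
            _ ≤ ‖(nfun (y - p) - nfun (v - p) : X →L[ℝ] ℝ)‖ * ‖x - v‖ :=
                ContinuousLinearMap.le_opNorm _ _
            _ ≤ (ε/(2*(M+1))) * ‖x - v‖ :=
                mul_le_mul_of_nonneg_right hclose (norm_nonneg _)
        have hg2 : -(ε/2) ≤ nfun (y - p) (x - v) := by
          have he2 : (x - v) = (x - y) + (y - v) := by abel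
          rw [he2, map_add]
          have h13 : -(‖y - v‖) ≤ (nfun (y - p) : X →L[ℝ] ℝ) (y - v) := by
            have := ContinuousLinearMap.le_opNorm (nfun (y - p)) (y - v)
            rw [nfun_norm (sub_ne_zero.mpr hyp_ne), one_mul, Real.norm_eq_abs] at this
            have habs := neg_abs_le ((nfun (y - p) : X →L[ℝ] ℝ) (y - v))
            linarith
          have h14 : ‖y - v‖ ≤ ε/2 :=
            le_of_lt (lt_of_lt_of_le hy_close
              (le_trans (min_le_right _ _) (min_le_right _ _)))
          linarith
        linarith
      by_contra hneg
      push_neg at hneg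
      have := hkey (-(nfun (v - p) (x - v))/2) (by linarith)
      linarith
    refine ⟨v, ⟨hvC, hvA, hVI⟩, ms, ?_⟩
    simp only [hxs] at hms_tendsto
    exact hms_tendsto
  -- uniqueness of good points
  have Guniq : ∀ x : X, ∀ v v' : X,
      (v ∈ C ∧ (v, (0:X)) ∈ A ∧
        (∀ p ∈ C, (p, (0:X)) ∈ A → p ≠ v → 0 ≤ nfun (v - p) (x - v))) →
      (v' ∈ C ∧ (v', (0:X)) ∈ A ∧
        (∀ p ∈ C, (p, (0:X)) ∈ A → p ≠ v' → 0 ≤ nfun (v' - p) (x - v'))) →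
      v = v' := by
    intro x v v' hv hv'
    apply good_uniq τ hτ_pos hX_us
    · intro hne
      exact hv.2.2 v' hv'.1 hv'.2.1 hne
    · intro hne
      exact hv'.2.2 v hv.1 hv.2.1 hne
  -- existence of good points
  have hex : ∀ x ∈ C, ∃ v : X, v ∈ C ∧ (v, (0:X)) ∈ A ∧
      (∀ p ∈ C, (p, (0:X)) ∈ A → p ≠ v → 0 ≤ nfun (v - p) (x - v)) := by
    intro x hx
    have htend : Tendsto (fun n : ℕ => (n:ℝ) + 1) atTop atTop :=
      Filter.tendsto_atTop_add_const_right atTop 1 tendsto_natCast_atTop_atTop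
    obtain ⟨v, hgood, _⟩ := core x hx (fun n => (n:ℝ) + 1)
      (fun n => by positivity) htend
    exact ⟨v, hgood⟩
  classical
  set Q : X → X := fun x => if h : x ∈ C then (hex x h).choose else x with hQdef
  have hQgood : ∀ x (h : x ∈ C), (Q x) ∈ C ∧ (Q x, (0:X)) ∈ A ∧
      (∀ p ∈ C, (p, (0:X)) ∈ A → p ≠ Q x → 0 ≤ nfun (Q x - p) (x - Q x)) := by
    intro x h
    simp only [hQdef, dif_pos h]
    exact (hex x h).choose_spec
  have hQF : ∀ x ∈ C, Q x ∈ {p ∈ C | (p, (0:X)) ∈ A} := by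
    intro x hx
    exact ⟨(hQgood x hx).1, (hQgood x hx).2.1⟩
  have hconv : ∀ x ∈ C, ∀ lamSeq : ℕ → ℝ, (∀ n, 0 < lamSeq n) →
      Tendsto lamSeq atTop atTop →
      Tendsto (fun n => J (lamSeq n) x) atTop (nhds (Q x)) := by
    intro x hx ls h0 htop
    apply tendsto_of_subseq_tendsto
    intro ns hns
    obtain ⟨v, hgood, ms, hconv⟩ := core x hx (fun n => ls (ns n))
      (fun n => h0 _) (htop.comp hns)
    refine ⟨ms, ?_⟩
    have hveq : v = Q x := Guniq x v (Q x) hgood ⟨(hQgood x hx).1, (hQgood x hx).2.1, (hQgood x hx).2.2⟩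
    rw [← hveq]
    exact hconv
  have hQfix : ∀ p ∈ {p ∈ C | (p, (0:X)) ∈ A}, Q p = p := by
    intro p hp
    apply (Guniq p (Q p) p ⟨(hQgood p hp.1).1, (hQgood p hp.1).2.1, (hQgood p hp.1).2.2⟩ ?_)
    refine ⟨hp.1, hp.2, ?_⟩
    intro q hqC hqA hqp
    have : p - p = (0:X) := by abel
    rw [this, map_zero]
  refine ⟨⟨Q hC_ne.choose, hQF _ hC_ne.choose_spec⟩, Q, hQF, hconv, hQfix, ?_, ?_, ?_⟩
  · -- nonexpansive
    intro x hx y hy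
    have htend : Tendsto (fun n : ℕ => (n:ℝ) + 1) atTop atTop :=
      Filter.tendsto_atTop_add_const_right atTop 1 tendsto_natCast_atTop_atTop
    have hcx := hconv x hx (fun n => (n:ℝ)+1) (fun n => by positivity) htend
    have hcy := hconv y hy (fun n => (n:ℝ)+1) (fun n => by positivity) htend
    have hnorm : Tendsto (fun n : ℕ => ‖J ((n:ℝ)+1) x - J ((n:ℝ)+1) y‖) atTop
        (nhds ‖Q x - Q y‖) := (hcx.sub hcy).norm
    apply le_of_tendsto hnorm
    filter_upwards with n
    exact hJne ((n:ℝ)+1) (by positivity) x hx y hy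
  · -- sunny
    intro x hx t ht hyC
    have hQxgood := hQgood x hx
    apply (Guniq _ (Q (Q x + t • (x - Q x))) (Q x) ⟨(hQgood _ hyC).1, (hQgood _ hyC).2.1, (hQgood _ hyC).2.2⟩ ?_)
    refine ⟨hQxgood.1, hQxgood.2.1, ?_⟩
    intro p hpC hpA hpQ
    have heq : (Q x + t • (x - Q x)) - Q x = t • (x - Q x) := by abel
    rw [heq, map_smul, smul_eq_mul]
    exact mul_nonneg ht (hQxgood.2.2 p hpC hpA hpQ)
  · -- uniqueness of sunny nonexpansive retraction
    intro Q' hQ'F hQ'fix hQ'ne hQ'sunny x hx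
    apply Guniq x (Q' x) (Q x) ?_ ⟨(hQgood x hx).1, (hQgood x hx).2.1, (hQgood x hx).2.2⟩
    have hQ'xF := hQ'F x hx
    refine ⟨hQ'xF.1, hQ'xF.2, ?_⟩
    intro p hpC hpA hpne
    apply nfun_nonneg_of_norm_le τ hτ_pos hX_us (sub_ne_zero.mpr (Ne.symm hpne)) one_pos
    intro lam hlam hlam1
    set ylam : X := Q' x + lam • (x - Q' x) with hylam
    have hyC : ylam ∈ C := by
      have : ylam = (1 - lam) • Q' x + lam • x := by rw [hylam]; module
      rw [this]
      exact hC_convex hQ'xF.1 hx (by linarith) (le_of_lt hlam) (by ring)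
    have hQ'y : Q' ylam = Q' x := hQ'sunny x hx lam (le_of_lt hlam) hyC
    have hp : p ∈ {p ∈ C | (p, (0:X)) ∈ A} := ⟨hpC, hpA⟩
    have := hQ'ne ylam hyC p hpC
    rw [hQ'y, hQ'fix p hp] at this
    have heq : ylam - p = (Q' x - p) + lam • (x - Q' x) := by rw [hylam]; abel
    rwa [heq] at this
end
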